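/- arXiv:2509.02519 — 9 statements merged into one kernel-verified Lean document; each statement's English description precedes it below -/
import Mathlib

section
/- Let (R, 𝒮) be an instance of Exact Cover by 3-Sets with |R| = 3ρ and each S ∈ 𝒮 a 3-element subset of R. Construct the election whose candidate set is C = {c_S : S ∈ 𝒮}, whose voter set is V = {v_r, v'_r : r ∈ R} (two voters per ground-set element), where for each S ∈ 𝒮 candidate c_S is approved exactly by the voters {v_r, v'_r : r ∈ S}, and whose committee size is k = ρ. Then there exists a committee W ⊆ C with |W| ≤ ρ and Pairs(W) ≥ 15ρ if and only if there exists a subcollection 𝒮' ⊆ 𝒮 with |𝒮'| = ρ whose union is R. -/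
noncomputable section

/-- The `Pairs` score of a committee `W`: the number of unordered pairs of distinct
voters that jointly approve some member of `W`. -/
def pairsScore {V C : Type*} [DecidableEq C] (A : V → Finset C) (W : Finset C) : ℕ :=
  Set.ncard {p : Sym2 V | ¬ p.IsDiag ∧ ∃ u v : V, p = s(u, v) ∧ (A u ∩ A v ∩ W).Nonempty}

namespace X3CAux

variable {R : Type*} [Fintype R] [DecidableEq R]

/-- Voters covered by a set `S`. -/
def VS (S : Finset R) : Finset (R ⊕ R) :=
  S.map ⟨Sum.inl, Sum.inl_injective⟩ ∪ S.map ⟨Sum.inr, Sum.inr_injective⟩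

omit [Fintype R] in
lemma mem_VS {S : Finset R} {v : R ⊕ R} : v ∈ VS S ↔ Sum.elim id id v ∈ S := by
  cases v <;> simp [VS]

omit [Fintype R] in
lemma card_VS {S : Finset R} : (VS S).card = 2 * S.card := by
  rw [VS, Finset.card_union_of_disjoint, Finset.card_map, Finset.card_map]
  · ring
  · rw [Finset.disjoint_left]
    rintro x hx hy
    simp only [Finset.mem_map, Function.Embedding.coeFn_mk] at hx hy
    obtain ⟨a, -, rfl⟩ := hx
    obtain ⟨b, -, hb⟩ := hy
    exact Sum.inl_ne_inr hb.symm

/-- The unordered pairs of distinct voters both covered by `S`. -/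
def pairFinset (S : Finset R) : Finset (Sym2 (R ⊕ R)) :=
  (VS S).offDiag.image Sym2.mk.uncurry

omit [Fintype R] in
lemma mem_pairFinset {S : Finset R} {p : Sym2 (R ⊕ R)} :
    p ∈ pairFinset S ↔ ¬ p.IsDiag ∧ ∀ u ∈ p, Sum.elim id id u ∈ S := by
  induction p using Sym2.ind with
  | _ a b =>
    constructor
    · rintro hp
      simp only [pairFinset, Finset.mem_image, Finset.mem_offDiag] at hp
      obtain ⟨⟨x, y⟩, ⟨hx, hy, hxy⟩, hs⟩ := hp
      rw [mem_VS] at hx hy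
      constructor
      · intro hdiag
        rw [Sym2.mk_isDiag_iff] at hdiag
        rcases Sym2.eq_iff.mp hs with ⟨rfl, rfl⟩ | ⟨rfl, rfl⟩
        · exact hxy hdiag
        · exact hxy hdiag.symm
      · intro u hu
        rcases Sym2.eq_iff.mp hs with ⟨rfl, rfl⟩ | ⟨rfl, rfl⟩ <;>
          rcases Sym2.mem_iff.mp hu with rfl | rfl <;> assumption
    · rintro ⟨hd, hm⟩
      simp only [pairFinset, Finset.mem_image, Finset.mem_offDiag]
      refine ⟨(a, b), ⟨mem_VS.mpr (hm a (Sym2.mem_mk_left a b)),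
        mem_VS.mpr (hm b (Sym2.mem_mk_right a b)), ?_⟩, rfl⟩
      intro h; exact hd (Sym2.mk_isDiag_iff.mpr h)

omit [Fintype R] in
lemma card_pairFinset {S : Finset R} (h : S.card = 3) : (pairFinset S).card = 15 := by
  rw [pairFinset, Sym2.card_image_offDiag, card_VS, h]
  rfl

omit [Fintype R] in
lemma disjoint_pairFinset {S T : Finset R} (h : Disjoint S T) :
    Disjoint (pairFinset S) (pairFinset T) := by
  rw [Finset.disjoint_left]
  intro p hS hT
  induction p using Sym2.ind with
  | _ a b =>
    have h1 := (mem_pairFinset.mp hS).2 a (Sym2.mem_mk_left a b)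
    have h2 := (mem_pairFinset.mp hT).2 a (Sym2.mem_mk_left a b)
    exact Finset.disjoint_left.mp h h1 h2

omit [Fintype R] in
/-- The `pairsScore` in the constructed election is the cardinality of the union of the
pair-sets of the committee members. -/
lemma score_eq (𝒮 : Finset (Finset R)) (W : Finset {S : Finset R // S ∈ 𝒮}) :
    pairsScore
      (fun v : R ⊕ R =>
        Finset.univ.filter fun c : {S : Finset R // S ∈ 𝒮} => Sum.elim id id v ∈ c.1)
      W = (W.biUnion fun S => pairFinset S.1).card := by
  have hset : {p : Sym2 (R ⊕ R) | ¬ p.IsDiag ∧ ∃ u v : R ⊕ R, p = s(u, v) ∧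
      ((Finset.univ.filter fun c : {S : Finset R // S ∈ 𝒮} => Sum.elim id id u ∈ c.1) ∩
       (Finset.univ.filter fun c : {S : Finset R // S ∈ 𝒮} => Sum.elim id id v ∈ c.1) ∩
       W).Nonempty}
      = ↑(W.biUnion fun S => pairFinset S.1) := by
    ext p
    induction p using Sym2.ind with
    | _ a b =>
      simp only [Set.mem_setOf_eq, Finset.mem_coe, Finset.mem_biUnion, mem_pairFinset]
      constructor
      · rintro ⟨hd, u, v, heq, c, hc⟩
        rw [Finset.mem_inter, Finset.mem_inter, Finset.mem_filter, Finset.mem_filter] at hc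
        obtain ⟨⟨⟨-, hu⟩, -, hv⟩, hcW⟩ := hc
        refine ⟨c, hcW, hd, ?_⟩
        intro w hw
        rcases Sym2.eq_iff.mp heq with ⟨rfl, rfl⟩ | ⟨rfl, rfl⟩ <;>
          rcases Sym2.mem_iff.mp hw with rfl | rfl <;> assumption
      · rintro ⟨c, hcW, hd, hm⟩
        refine ⟨hd, a, b, rfl, c, ?_⟩
        rw [Finset.mem_inter, Finset.mem_inter, Finset.mem_filter, Finset.mem_filter]
        exact ⟨⟨⟨Finset.mem_univ _, hm a (Sym2.mem_mk_left a b)⟩,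
          Finset.mem_univ _, hm b (Sym2.mem_mk_right a b)⟩, hcW⟩
  rw [pairsScore, hset, Set.ncard_coe_finset]

end X3CAux

open X3CAux

/-- **Hardness reduction from X3C to maximizing `Pairs` (correctness).**
Let `(R, 𝒮)` be an X3C instance with `|R| = 3ρ` and every `S ∈ 𝒮` of size 3. In the
election whose candidates are the sets of `𝒮`, whose voters are two copies of `R`
(voter `v_r` and `v'_r` for each `r ∈ R`), where candidate `c_S` is approved exactly by
the voters corresponding to the elements of `S`, there is a committee `W` with `|W| ≤ ρ`
and `Pairs(W) ≥ 15ρ` if and only if some subcollection `𝒮' ⊆ 𝒮` with `|𝒮'| = ρ` has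
union `R`. -/
theorem x3c_pairs_reduction {R : Type*} [Fintype R] [DecidableEq R]
    (ρ : ℕ) (hR : Fintype.card R = 3 * ρ)
    (𝒮 : Finset (Finset R)) (h𝒮 : ∀ S ∈ 𝒮, S.card = 3) :
    (∃ W : Finset {S : Finset R // S ∈ 𝒮}, W.card ≤ ρ ∧
        15 * ρ ≤ pairsScore
          (fun v : R ⊕ R =>
            Finset.univ.filter fun c : {S : Finset R // S ∈ 𝒮} => Sum.elim id id v ∈ c.1)
          W) ↔
      (∃ 𝒮' ⊆ 𝒮, 𝒮'.card = ρ ∧ 𝒮'.biUnion id = Finset.univ) := by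
  constructor
  · rintro ⟨W, hWle, hscore⟩
    rw [score_eq] at hscore
    have hub : (W.biUnion fun S => pairFinset S.1).card ≤ 15 * W.card := by
      calc (W.biUnion fun S => pairFinset S.1).card
          ≤ ∑ S ∈ W, (pairFinset S.1).card := Finset.card_biUnion_le
        _ ≤ ∑ _S ∈ W, 15 :=
            Finset.sum_le_sum fun S _ => le_of_eq (card_pairFinset (h𝒮 S.1 S.2))
        _ = 15 * W.card := by rw [Finset.sum_const, smul_eq_mul, mul_comm]
    have hWcard : W.card = ρ := le_antisymm hWle (by omega)
    have hdisj : ∀ S ∈ W, ∀ T ∈ W, S ≠ T → Disjoint S.1 T.1 := by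
      intro S hS T hT hST
      rw [Finset.disjoint_left]
      intro r hrS hrT
      have hp₀ : ∀ U : Finset R, r ∈ U → s(Sum.inl r, (Sum.inr r : R ⊕ R)) ∈ pairFinset U := by
        intro U hrU
        refine mem_pairFinset.mpr ⟨?_, ?_⟩
        · rw [Sym2.mk_isDiag_iff]; exact fun h => Sum.inl_ne_inr h
        · intro u hu
          rcases Sym2.mem_iff.mp hu with rfl | rfl <;> simpa
      have hsplit : (W.biUnion fun S => pairFinset S.1) ⊆
          (pairFinset S.1).erase s(Sum.inl r, (Sum.inr r : R ⊕ R)) ∪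
          ((W.erase S).biUnion fun T => pairFinset T.1) := by
        intro q hq
        obtain ⟨U, hU, hqU⟩ := Finset.mem_biUnion.mp hq
        by_cases hUS : U = S
        · subst hUS
          by_cases hq0 : q = s(Sum.inl r, (Sum.inr r : R ⊕ R))
          · refine Finset.mem_union_right _ (Finset.mem_biUnion.mpr
              ⟨T, Finset.mem_erase.mpr ⟨fun h => hST h.symm, hT⟩, ?_⟩)
            rw [hq0]; exact hp₀ T.1 hrT
          · exact Finset.mem_union_left _ (Finset.mem_erase.mpr ⟨hq0, hqU⟩)
        · exact Finset.mem_union_right _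
            (Finset.mem_biUnion.mpr ⟨U, Finset.mem_erase.mpr ⟨hUS, hU⟩, hqU⟩)
      have h1 : ((pairFinset S.1).erase s(Sum.inl r, (Sum.inr r : R ⊕ R))).card = 14 := by
        rw [Finset.card_erase_of_mem (hp₀ S.1 hrS), card_pairFinset (h𝒮 S.1 S.2)]
      have h2 : ((W.erase S).biUnion fun T => pairFinset T.1).card ≤ 15 * (W.card - 1) := by
        calc ((W.erase S).biUnion fun T => pairFinset T.1).card
            ≤ ∑ T ∈ W.erase S, (pairFinset T.1).card := Finset.card_biUnion_le
          _ ≤ ∑ _T ∈ W.erase S, 15 :=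
              Finset.sum_le_sum fun T _ => le_of_eq (card_pairFinset (h𝒮 T.1 T.2))
          _ = 15 * (W.card - 1) := by
              rw [Finset.sum_const, Finset.card_erase_of_mem hS, smul_eq_mul, mul_comm]
      have h3 := (Finset.card_le_card hsplit).trans (Finset.card_union_le _ _)
      have hpos : 1 ≤ W.card := Finset.card_pos.mpr ⟨S, hS⟩
      omega
    refine ⟨W.image Subtype.val, ?_, ?_, ?_⟩
    · intro S hS
      obtain ⟨T, _, rfl⟩ := Finset.mem_image.mp hS
      exact T.2
    · rw [Finset.card_image_of_injective _ Subtype.val_injective, hWcard]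
    · apply Finset.eq_univ_of_card
      rw [Finset.image_biUnion, hR]
      simp only [id_eq]
      rw [Finset.card_biUnion (fun S hS T hT hne =>
        hdisj S hS T hT (fun h => hne (by rw [h])))]
      calc ∑ S ∈ W, (id S.1).card = ∑ _S ∈ W, 3 :=
            Finset.sum_congr rfl fun S _ => h𝒮 S.1 S.2
        _ = 3 * ρ := by rw [Finset.sum_const, smul_eq_mul, hWcard, mul_comm]
  · rintro ⟨𝒮', hsub, hcard, hcover⟩
    have hdisj : ∀ S ∈ 𝒮', ∀ T ∈ 𝒮', S ≠ T → Disjoint S T := by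
      intro S hS T hT hST
      rw [Finset.disjoint_left]
      intro r hrS hrT
      have hsplit : 𝒮'.biUnion id ⊆ S.erase r ∪ (𝒮'.erase S).biUnion id := by
        intro x hx
        obtain ⟨U, hU, hxU⟩ := Finset.mem_biUnion.mp hx
        by_cases hUS : U = S
        · subst hUS
          by_cases hxr : x = r
          · refine Finset.mem_union_right _ (Finset.mem_biUnion.mpr
              ⟨T, Finset.mem_erase.mpr ⟨fun h => hST h.symm, hT⟩, ?_⟩)
            rw [hxr]; exact hrT
          · exact Finset.mem_union_left _ (Finset.mem_erase.mpr ⟨hxr, hxU⟩)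
        · exact Finset.mem_union_right _
            (Finset.mem_biUnion.mpr ⟨U, Finset.mem_erase.mpr ⟨hUS, hU⟩, hxU⟩)
      have h1 : (𝒮'.biUnion id).card = 3 * ρ := by
        rw [hcover, Finset.card_univ, hR]
      have h2 : (S.erase r).card = 2 := by
        rw [Finset.card_erase_of_mem hrS, h𝒮 S (hsub hS)]
      have h3 : ((𝒮'.erase S).biUnion id).card ≤ 3 * (ρ - 1) := by
        calc ((𝒮'.erase S).biUnion id).card
            ≤ ∑ U ∈ 𝒮'.erase S, (id U).card := Finset.card_biUnion_le
          _ ≤ ∑ _U ∈ 𝒮'.erase S, 3 := Finset.sum_le_sum fun U hU =>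
              le_of_eq (h𝒮 U (hsub (Finset.mem_of_mem_erase hU)))
          _ = 3 * (ρ - 1) := by
              rw [Finset.sum_const, Finset.card_erase_of_mem hS, hcard, smul_eq_mul, mul_comm]
      have h4 := (Finset.card_le_card hsplit).trans (Finset.card_union_le _ _)
      have hρ : 1 ≤ ρ := hcard ▸ Finset.card_pos.mpr ⟨S, hS⟩
      omega
    have hinj : Function.Injective
        (fun x : {S : Finset R // S ∈ 𝒮'} => (⟨x.1, hsub x.2⟩ : {S : Finset R // S ∈ 𝒮})) := by
      intro x y h
      apply Subtype.ext
      exact Subtype.mk_eq_mk.mp h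
    refine ⟨𝒮'.attach.image (fun x => (⟨x.1, hsub x.2⟩ : {S : Finset R // S ∈ 𝒮})), ?_, ?_⟩
    · rw [Finset.card_image_of_injective _ hinj, Finset.card_attach, hcard]
    · rw [score_eq, Finset.image_biUnion]
      rw [Finset.card_biUnion (fun x _ y _ hne => disjoint_pairFinset
        (hdisj x.1 x.2 y.1 y.2 (fun h => hne (Subtype.ext h))))]
      calc 15 * ρ = ∑ _x ∈ 𝒮'.attach, 15 := by
            rw [Finset.sum_const, Finset.card_attach, hcard, smul_eq_mul, mul_comm]
        _ = ∑ x ∈ 𝒮'.attach, (pairFinset (⟨x.1, hsub x.2⟩ :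
              {S : Finset R // S ∈ 𝒮}).1).card :=
            Finset.sum_congr rfl fun x _ => (card_pairFinset (h𝒮 x.1 (hsub x.2))).symm
        _ ≤ _ := le_refl _
end
end

section
/- Let (R, 𝒮) be an instance of Exact Cover by 3-Sets with |R| = 3ρ and each S ∈ 𝒮 a 3-element subset of R. Construct the election whose candidate set is C = {c_S : S ∈ 𝒮}, whose voter set is V = {v} ∪ {v_r : r ∈ R} for a distinguished voter v, where for each S ∈ 𝒮 candidate c_S is approved exactly by {v} ∪ {v_r : r ∈ S}, and whose committee size is k = ρ. Then there exists a committee W ⊆ C with |W| = ρ such that every pair of distinct voters is connected by W (i.e., Cons(W) = n(n−1)/2 where n = |V|) if and only if there exists a subcollection 𝒮' ⊆ 𝒮 with |𝒮'| = ρ whose union is R. -/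
/-- Voters `u` and `v` are connected by the committee `W` if there is a sequence of
voters from `u` to `v` in which every two consecutive voters jointly approve some
member of `W`. -/
def ConnectedBy {V C : Type*} [DecidableEq C]
    (A : V → Finset C) (W : Finset C) (u v : V) : Prop :=
  Relation.ReflTransGen (fun a b => (A a ∩ A b ∩ W).Nonempty) u v

/-- **Hardness reduction from X3C to maximizing `Cons` (correctness).**
Let `(R, 𝒮)` be an X3C instance with `|R| = 3ρ` and every `S ∈ 𝒮` of size 3. In the
election whose candidates are the sets of `𝒮` and whose voters are the elements of `R`
together with one distinguished extra voter (modelled as `Option R`, with `none` the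
distinguished voter), where candidate `c_S` is approved exactly by the distinguished
voter and the voters corresponding to elements of `S`, there is a committee `W` of size
exactly `ρ` connecting every pair of distinct voters if and only if some subcollection
`𝒮' ⊆ 𝒮` with `|𝒮'| = ρ` has union `R`. -/
theorem x3c_cons_reduction {R : Type*} [Fintype R] [DecidableEq R]
    (ρ : ℕ) (hR : Fintype.card R = 3 * ρ)
    (𝒮 : Finset (Finset R)) (h𝒮 : ∀ S ∈ 𝒮, S.card = 3) :
    (∃ W : Finset {S : Finset R // S ∈ 𝒮}, W.card = ρ ∧
        ∀ u v : Option R, u ≠ v →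
          ConnectedBy
            (fun w : Option R =>
              Finset.univ.filter fun c : {S : Finset R // S ∈ 𝒮} =>
                ∀ r : R, w = some r → r ∈ c.1)
            W u v) ↔
      (∃ 𝒮' ⊆ 𝒮, 𝒮'.card = ρ ∧ 𝒮'.biUnion id = Finset.univ) := by
  set A : Option R → Finset {S : Finset R // S ∈ 𝒮} := fun w =>
    Finset.univ.filter fun c : {S : Finset R // S ∈ 𝒮} =>
      ∀ r : R, w = some r → r ∈ c.1 with hA
  constructor
  · rintro ⟨W, hWcard, hconn⟩
    refine ⟨W.image (fun c => c.1), ?_, ?_, ?_⟩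
    · intro S hS
      simp only [Finset.mem_image] at hS
      obtain ⟨c, _, rfl⟩ := hS
      exact c.2
    · rw [Finset.card_image_of_injective _ Subtype.val_injective, hWcard]
    · apply Finset.eq_univ_iff_forall.mpr
      intro r
      have h := hconn (some r) none (by simp)
      rcases Relation.ReflTransGen.cases_head h with h' | ⟨b, hb, _⟩
      · exact absurd h' (by simp)
      · obtain ⟨c, hc⟩ := hb
        simp only [Finset.mem_inter] at hc
        obtain ⟨⟨hc1, _⟩, hcW⟩ := hc
        simp only [hA, Finset.mem_filter, Finset.mem_univ, true_and] at hc1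
        simp only [Finset.mem_biUnion, id]
        exact ⟨c.1, Finset.mem_image_of_mem _ hcW, hc1 r rfl⟩
  · rintro ⟨𝒮', hsub, hcard, hunion⟩
    have hinj : Function.Injective
        (fun s : {x // x ∈ 𝒮'} => (⟨s.1, hsub s.2⟩ : {S : Finset R // S ∈ 𝒮})) := by
      intro a b hab
      simp only [Subtype.mk.injEq, Subtype.val_inj] at hab
      exact hab
    refine ⟨(𝒮'.attach).map ⟨_, hinj⟩, by simp [hcard], ?_⟩
    set W := (𝒮'.attach).map ⟨_, hinj⟩ with hW
    have hsymm : Symmetric (fun a b : Option R => (A a ∩ A b ∩ W).Nonempty) := by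
      intro a b h
      rwa [Finset.inter_comm (A a)] at h
    have key : ∀ w : Option R,
        Relation.ReflTransGen (fun a b => (A a ∩ A b ∩ W).Nonempty) w none := by
      intro w
      match w with
      | none => exact Relation.ReflTransGen.refl
      | some r =>
        apply Relation.ReflTransGen.single
        have hr : r ∈ 𝒮'.biUnion id := hunion ▸ Finset.mem_univ r
        simp only [Finset.mem_biUnion, id] at hr
        obtain ⟨S, hS𝒮', hrS⟩ := hr
        refine ⟨⟨S, hsub hS𝒮'⟩, ?_⟩
        simp only [Finset.mem_inter, hA, Finset.mem_filter, Finset.mem_univ, true_and]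
        refine ⟨⟨fun r' hr' => by cases hr'; exact hrS, fun r' hr' => by cases hr'⟩, ?_⟩
        simp only [hW, Finset.mem_map, Function.Embedding.coeFn_mk]
        exact ⟨⟨S, hS𝒮'⟩, Finset.mem_attach _ _, rfl⟩
    intro u v _
    exact (key u).trans ((@Relation.ReflTransGen.symmetric _ _ ⟨fun _ _ h => hsymm h⟩).symm _ _ (key v))
end

section
/- For every α ∈ [0,1] and every election instance ℰ = (V, A, k), there exists a feasible committee W (|W| = k) that simultaneously satisfies (⌈αk⌉/k)-Pairs and (⌊(1−α)k⌋/k)-AV, i.e., Pairs(W) ≥ (⌈αk⌉/k) · max{Pairs(W') : |W'| = k} and AV(W) ≥ (⌊(1−α)k⌋/k) · max{AV(W') : |W'| = k}. -/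
noncomputable section

/-- The approval (AV) score of a committee `W`: the total number of approvals its
members receive. -/
def avScore {V C : Type*} [Fintype V] [DecidableEq C]
    (A : V → Finset C) (W : Finset C) : ℕ :=
  ∑ v, (A v ∩ W).card

/-- The maximum value of a committee score over all committees of size `k`. -/
def maxScore {C : Type*} [Fintype C] [DecidableEq C] (f : Finset C → ℕ) (k : ℕ) : ℕ :=
  ((Finset.univ : Finset C).powersetCard k).sup f

/-- Any `n`-set contains an `m`-subset carrying at least an `m/n` fraction of any
additive weight. -/
lemma exists_top_subset {C : Type*} [DecidableEq C] (f : C → ℕ) (W : Finset C) (m : ℕ)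
    (hs : m ≤ W.card) :
    ∃ S ⊆ W, S.card = m ∧ m * ∑ c ∈ W, f c ≤ W.card * ∑ c ∈ S, f c := by
  obtain ⟨S, hSmem, hmax⟩ :=
    Finset.exists_max_image (W.powersetCard m) (fun T => ∑ c ∈ T, f c)
      (Finset.powersetCard_nonempty.2 hs)
  rw [Finset.mem_powersetCard] at hSmem
  obtain ⟨hSW, hScard⟩ := hSmem
  refine ⟨S, hSW, hScard, ?_⟩
  have hdom : ∀ a ∈ S, ∀ b ∈ W \ S, f b ≤ f a := by
    intro a ha b hb
    rw [Finset.mem_sdiff] at hb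
    obtain ⟨hbW, hbS⟩ := hb
    have hbe : b ∉ S.erase a := fun h => hbS (Finset.erase_subset _ _ h)
    have h1 : insert b (S.erase a) ∈ W.powersetCard m := by
      rw [Finset.mem_powersetCard]
      constructor
      · intro x hx
        rcases Finset.mem_insert.1 hx with rfl | hx
        · exact hbW
        · exact hSW (Finset.erase_subset _ _ hx)
      · have hm1 : 1 ≤ m := hScard ▸ Finset.card_pos.2 ⟨a, ha⟩
        rw [Finset.card_insert_of_notMem hbe, Finset.card_erase_of_mem ha, hScard]
        omega
    have h2 := hmax _ h1
    rw [Finset.sum_insert hbe, ← Finset.add_sum_erase S f ha] at h2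
    exact le_of_add_le_add_right h2
  have hsplit : ∑ c ∈ W \ S, f c + ∑ c ∈ S, f c = ∑ c ∈ W, f c := Finset.sum_sdiff hSW
  have hineq : m * ∑ c ∈ W \ S, f c ≤ (W.card - m) * ∑ c ∈ S, f c := by
    have h1 : ∑ _a ∈ S, ∑ b ∈ W \ S, f b ≤ ∑ a ∈ S, ∑ _b ∈ W \ S, f a :=
      Finset.sum_le_sum fun a ha => Finset.sum_le_sum fun b hb => hdom a ha b hb
    have l1 : ∑ _a ∈ S, ∑ b ∈ W \ S, f b = m * ∑ b ∈ W \ S, f b := by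
      rw [Finset.sum_const, hScard, smul_eq_mul]
    have l2 : ∑ a ∈ S, ∑ _b ∈ W \ S, f a = (W.card - m) * ∑ a ∈ S, f a := by
      simp only [Finset.sum_const, Finset.card_sdiff_of_subset hSW, hScard, smul_eq_mul]
      exact (Finset.mul_sum _ _ _).symm
    rw [l1, l2] at h1
    exact h1
  calc m * ∑ c ∈ W, f c = m * ∑ c ∈ W \ S, f c + m * ∑ c ∈ S, f c := by
        rw [← hsplit, Nat.mul_add]
    _ ≤ (W.card - m) * ∑ c ∈ S, f c + m * ∑ c ∈ S, f c := Nat.add_le_add_right hineq _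
    _ = W.card * ∑ c ∈ S, f c := by rw [← Nat.add_mul, Nat.sub_add_cancel hs]

/-- Fractional coverage: any `n`-set contains an `m`-subset covering at least an
`m/n` fraction of what the whole set covers. -/
lemma exists_coverage_subset {C X : Type*} [DecidableEq C] [DecidableEq X] [LinearOrder C]
    (P : C → Finset X) (W : Finset C) (m : ℕ) (hs : m ≤ W.card) :
    ∃ S ⊆ W, S.card = m ∧ m * (W.biUnion P).card ≤ W.card * (S.biUnion P).card := by
  set g : C → Finset X := fun c => P c \ ((W.filter (fun c' => c' < c)).biUnion P) with hg
  have gsub : ∀ c, g c ⊆ P c := fun c => Finset.sdiff_subset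
  have gdisj : ∀ c ∈ W, ∀ c' ∈ W, c ≠ c' → Disjoint (g c) (g c') := by
    have key : ∀ c ∈ W, ∀ c', c < c' → Disjoint (g c) (g c') := by
      intro c hc c' hlt
      rw [Finset.disjoint_left]
      intro x hx hx'
      simp only [hg, Finset.mem_sdiff, Finset.mem_biUnion, Finset.mem_filter] at hx'
      exact hx'.2 ⟨c, ⟨hc, hlt⟩, gsub c hx⟩
    intro c hc c' hc' hne
    rcases hne.lt_or_gt with h | h
    · exact key c hc c' h
    · exact (key c' hc' c h).symm
  have hcard_biUnion : ∀ S ⊆ W, (S.biUnion g).card = ∑ c ∈ S, (g c).card := by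
    intro S hSW
    exact Finset.card_biUnion fun x hx y hy hxy => gdisj x (hSW hx) y (hSW hy) hxy
  have hcover : W.biUnion P ⊆ W.biUnion g := by
    intro x hx
    rw [Finset.mem_biUnion] at hx
    obtain ⟨c, hc, hxc⟩ := hx
    have hT : (W.filter fun c => x ∈ P c).Nonempty := ⟨c, Finset.mem_filter.2 ⟨hc, hxc⟩⟩
    set c₀ := (W.filter fun c => x ∈ P c).min' hT with hc₀def
    have hc₀ := Finset.min'_mem _ hT
    rw [Finset.mem_filter] at hc₀
    rw [Finset.mem_biUnion]
    refine ⟨c₀, hc₀.1, ?_⟩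
    simp only [hg, Finset.mem_sdiff, Finset.mem_biUnion, Finset.mem_filter]
    refine ⟨hc₀.2, ?_⟩
    rintro ⟨c', ⟨hc'W, hlt⟩, hx'⟩
    exact absurd (Finset.min'_le _ c' (Finset.mem_filter.2 ⟨hc'W, hx'⟩)) (not_le.2 hlt)
  obtain ⟨S, hSW, hScard, hkey⟩ := exists_top_subset (fun c => (g c).card) W m hs
  refine ⟨S, hSW, hScard, ?_⟩
  have h1 : (W.biUnion P).card ≤ ∑ c ∈ W, (g c).card := by
    rw [← hcard_biUnion W (Finset.Subset.refl W)]
    exact Finset.card_le_card hcover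
  have h2 : ∑ c ∈ S, (g c).card ≤ (S.biUnion P).card := by
    rw [← hcard_biUnion S hSW]
    apply Finset.card_le_card
    intro x hx
    rw [Finset.mem_biUnion] at hx ⊢
    obtain ⟨c, hc, h⟩ := hx
    exact ⟨c, hc, gsub c h⟩
  calc m * (W.biUnion P).card ≤ m * ∑ c ∈ W, (g c).card := Nat.mul_le_mul_left _ h1
    _ ≤ W.card * ∑ c ∈ S, (g c).card := hkey
    _ ≤ W.card * (S.biUnion P).card := Nat.mul_le_mul_left _ h2

/-- **Simultaneous approximation of `Pairs` and `AV`.** For every `α ∈ [0,1]` and every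
election with committee size `k`, there is a feasible committee (of size exactly `k`)
that simultaneously satisfies `(⌈αk⌉/k)`-Pairs and `(⌊(1−α)k⌋/k)`-AV. -/
theorem pairs_av_simultaneous {V C : Type*} [Fintype V] [Fintype C] [DecidableEq C]
    (A : V → Finset C) (k : ℕ) (hk : 0 < k) (hkm : k ≤ Fintype.card C)
    (α : ℝ) (hα0 : 0 ≤ α) (hα1 : α ≤ 1) :
    ∃ W : Finset C, W.card = k ∧
      ((⌈α * (k : ℝ)⌉₊ : ℝ) / (k : ℝ)) * (maxScore (pairsScore A) k : ℝ)
        ≤ (pairsScore A W : ℝ) ∧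
      ((⌊(1 - α) * (k : ℝ)⌋₊ : ℝ) / (k : ℝ)) * (maxScore (avScore A) k : ℝ)
        ≤ (avScore A W : ℝ) := by
  classical
  letI : LinearOrder C := LinearOrder.lift' (Fintype.equivFin C) (Fintype.equivFin C).injective
  set P : C → Finset (Sym2 V) := fun c =>
    Finset.univ.filter fun p => ¬ p.IsDiag ∧ ∃ u v : V, p = s(u, v) ∧ c ∈ A u ∧ c ∈ A v
    with hPdef
  have pairs_eq : ∀ W : Finset C, pairsScore A W = (W.biUnion P).card := by
    intro W
    rw [pairsScore, ← Set.ncard_coe_finset]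
    congr 1
    ext p
    simp only [Set.mem_setOf_eq, Finset.coe_biUnion, Finset.mem_coe, Set.mem_iUnion,
      Finset.mem_biUnion, hPdef, Finset.mem_filter, Finset.mem_univ, true_and]
    constructor
    · rintro ⟨hd, u, v, rfl, c, hc⟩
      simp only [Finset.mem_inter] at hc
      exact ⟨c, hc.2, hd, u, v, rfl, hc.1.1, hc.1.2⟩
    · rintro ⟨c, hcW, hd, u, v, rfl, h1, h2⟩
      exact ⟨hd, u, v, rfl, c, by simp [Finset.mem_inter, h1, h2, hcW]⟩
  have pairs_mono : ∀ S W : Finset C, S ⊆ W → pairsScore A S ≤ pairsScore A W := by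
    intro S W h
    rw [pairs_eq, pairs_eq]
    exact Finset.card_le_card (Finset.biUnion_subset_biUnion_of_subset_left _ h)
  set w : C → ℕ := fun c => (Finset.univ.filter fun v => c ∈ A v).card with hwdef
  have av_eq : ∀ W : Finset C, avScore A W = ∑ c ∈ W, w c := by
    intro W
    rw [avScore]
    calc ∑ v, (A v ∩ W).card = ∑ v, ∑ c ∈ W, if c ∈ A v then 1 else 0 := by
          refine Finset.sum_congr rfl fun v _ => ?_
          rw [Finset.inter_comm, ← Finset.filter_mem_eq_inter, Finset.card_filter]
      _ = ∑ c ∈ W, ∑ v, if c ∈ A v then 1 else 0 := Finset.sum_comm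
      _ = ∑ c ∈ W, w c := Finset.sum_congr rfl fun c _ => (Finset.card_filter _ _).symm
  have hpow : ((Finset.univ : Finset C).powersetCard k).Nonempty :=
    Finset.powersetCard_nonempty.2 (by simpa using hkm)
  obtain ⟨WP, hWPmem, hWPeq⟩ := Finset.exists_mem_eq_sup _ hpow (pairsScore A)
  obtain ⟨WA, hWAmem, hWAeq⟩ := Finset.exists_mem_eq_sup _ hpow (avScore A)
  rw [Finset.mem_powersetCard] at hWPmem hWAmem
  have hWPcard : WP.card = k := hWPmem.2
  have hWAcard : WA.card = k := hWAmem.2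
  set nP : ℕ := ⌈α * (k : ℝ)⌉₊ with hnP
  set nA : ℕ := ⌊(1 - α) * (k : ℝ)⌋₊ with hnA
  have hkR : (0 : ℝ) < (k : ℝ) := by exact_mod_cast hk
  have hsk : nP ≤ k := Nat.ceil_le.2 (by nlinarith)
  have hst : nA + nP ≤ k := by
    have h1 : (nA : ℝ) ≤ (1 - α) * k := Nat.floor_le (by nlinarith)
    have h2 : (nP : ℝ) < α * k + 1 := Nat.ceil_lt_add_one (by positivity)
    have h3 : ((nA + nP : ℕ) : ℝ) < ((k + 1 : ℕ) : ℝ) := by push_cast; nlinarith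
    have h4 : nA + nP < k + 1 := by exact_mod_cast h3
    omega
  obtain ⟨SP, hSPsub, hSPcard, hSPkey⟩ :=
    exists_coverage_subset P WP nP (by rw [hWPcard]; exact hsk)
  obtain ⟨SA, hSAsub, hSAcard, hSAkey⟩ :=
    exists_top_subset w WA nA (by rw [hWAcard]; omega)
  have hU : (SP ∪ SA).card ≤ k := le_trans (Finset.card_union_le _ _) (by omega)
  obtain ⟨W, hW1, _hW2, hWcard⟩ :=
    Finset.exists_subsuperset_card_eq (Finset.subset_univ (SP ∪ SA)) hU (by simpa using hkm)
  refine ⟨W, hWcard, ?_, ?_⟩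
  · have hnat : nP * maxScore (pairsScore A) k ≤ k * pairsScore A W := by
      calc nP * maxScore (pairsScore A) k = nP * pairsScore A WP := by rw [maxScore, hWPeq]
        _ = nP * (WP.biUnion P).card := by rw [pairs_eq]
        _ ≤ WP.card * (SP.biUnion P).card := hSPkey
        _ = k * pairsScore A SP := by rw [hWPcard, pairs_eq]
        _ ≤ k * pairsScore A W := Nat.mul_le_mul_left _
            (pairs_mono _ _ ((Finset.subset_union_left).trans hW1))
    rw [div_mul_eq_mul_div, div_le_iff₀ hkR]
    exact_mod_cast hnat.trans_eq (Nat.mul_comm _ _)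
  · have hnat : nA * maxScore (avScore A) k ≤ k * avScore A W := by
      calc nA * maxScore (avScore A) k = nA * avScore A WA := by rw [maxScore, hWAeq]
        _ = nA * ∑ c ∈ WA, w c := by rw [av_eq]
        _ ≤ WA.card * ∑ c ∈ SA, w c := hSAkey
        _ = k * avScore A SA := by rw [hWAcard, av_eq]
        _ ≤ k * avScore A W := Nat.mul_le_mul_left _ (by
            rw [av_eq, av_eq]
            exact Finset.sum_le_sum_of_subset ((Finset.subset_union_right).trans hW1))
    rw [div_mul_eq_mul_div, div_le_iff₀ hkR]
    exact_mod_cast hnat.trans_eq (Nat.mul_comm _ _)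
end
end

section
/- For every α ∈ [0,1] and every election instance ℰ = (V, A, k), there exists a feasible committee W (|W| = k) that simultaneously satisfies (⌈αk⌉/k)-Pairs and (⌊(1−α)k⌋/k)-CC, i.e., Pairs(W) ≥ (⌈αk⌉/k) · max{Pairs(W') : |W'| = k} and CC(W) ≥ (⌊(1−α)k⌋/k) · max{CC(W') : |W'| = k}. -/
noncomputable section

/-- The Chamberlin–Courant (CC) score of a committee `W`: the number of voters who
approve at least one member of `W`. -/
def ccScore {V C : Type*} [Fintype V] [DecidableEq C]
    (A : V → Finset C) (W : Finset C) : ℕ :=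
  (Finset.univ.filter fun v : V => (A v ∩ W).Nonempty).card

open Finset

/-- Selection lemma: from any finite weighted set one can pick `a` elements
carrying at least an `a/|F|` fraction of the total weight. -/
lemma select_heavy {C : Type*} [DecidableEq C] :
    ∀ (d : ℕ) (F : Finset C) (n : C → ℕ) (a : ℕ), F.card = a + d →
      ∃ S ⊆ F, S.card = a ∧ a * ∑ c ∈ F, n c ≤ F.card * ∑ c ∈ S, n c := by
  intro d
  induction d with
  | zero =>
    intro F n a h
    exact ⟨F, Finset.Subset.refl F, by simpa using h, by rw [h]; simp⟩
  | succ d ih =>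
    intro F n a h
    have h' : F.card = a + d + 1 := by omega
    have hne : F.Nonempty := Finset.card_pos.mp (by omega)
    obtain ⟨x, hxF, hmin⟩ := F.exists_min_image n hne
    have hx1 : F.card * n x ≤ ∑ c ∈ F, n c := by
      calc F.card * n x = ∑ _c ∈ F, n x := by rw [Finset.sum_const, smul_eq_mul, mul_comm]
        _ ≤ ∑ c ∈ F, n c := Finset.sum_le_sum fun c hc => hmin c hc
    set F' := F.erase x with hF'
    have hcard' : F'.card = a + d := by
      rw [hF', Finset.card_erase_of_mem hxF]; omega
    obtain ⟨S, hSF', hScard, hS⟩ := ih F' n a hcard'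
    refine ⟨S, hSF'.trans (Finset.erase_subset _ _), hScard, ?_⟩
    have hsum : ∑ c ∈ F', n c + n x = ∑ c ∈ F, n c := Finset.sum_erase_add F n hxF
    -- (a+d) * ∑_F ≤ (a+d+1) * ∑_{F'}
    have key : (a + d) * ∑ c ∈ F, n c ≤ (a + d + 1) * ∑ c ∈ F', n c := by
      have h1 : (a + d + 1) * ∑ c ∈ F, n c
          = (a + d + 1) * ∑ c ∈ F', n c + (a + d + 1) * n x := by
        rw [← hsum]; ring
      have h2 : (a + d + 1) * n x ≤ ∑ c ∈ F, n c := by rw [← h']; exact hx1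
      have h3 : (a + d + 1) * ∑ c ∈ F, n c
          = (a + d) * ∑ c ∈ F, n c + ∑ c ∈ F, n c := by ring
      omega
    rcases Nat.eq_zero_or_pos (a + d) with h0 | hpos
    · have : a = 0 := by omega
      simp [this]
    · rw [h']
      rw [hcard'] at hS
      refine Nat.le_of_mul_le_mul_left ?_ hpos
      calc (a + d) * (a * ∑ c ∈ F, n c)
          = a * ((a + d) * ∑ c ∈ F, n c) := by ring
        _ ≤ a * ((a + d + 1) * ∑ c ∈ F', n c) := Nat.mul_le_mul_left _ key
        _ = (a + d + 1) * (a * ∑ c ∈ F', n c) := by ring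
        _ ≤ (a + d + 1) * ((a + d) * ∑ c ∈ S, n c) := Nat.mul_le_mul_left _ hS
        _ = (a + d) * ((a + d + 1) * ∑ c ∈ S, n c) := by ring

open scoped Classical in
/-- A generic coverage score. -/
def cov {X C : Type*} [Fintype X] [DecidableEq C] (g : X → Finset C) (Q : X → Prop)
    (W : Finset C) : ℕ :=
  (Finset.univ.filter fun x : X => Q x ∧ (g x ∩ W).Nonempty).card

lemma cov_mono {X C : Type*} [Fintype X] [DecidableEq C] (g : X → Finset C) (Q : X → Prop)
    {W W' : Finset C} (h : W ⊆ W') : cov g Q W ≤ cov g Q W' := by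
  classical
  unfold cov
  apply Finset.card_le_card
  intro x hx
  rw [Finset.mem_filter] at hx ⊢
  obtain ⟨hu, hQ, c, hc⟩ := hx
  rw [Finset.mem_inter] at hc
  exact ⟨hu, hQ, c, Finset.mem_inter.mpr ⟨hc.1, h hc.2⟩⟩

lemma cov_select {X C : Type*} [Fintype X] [DecidableEq C] (g : X → Finset C) (Q : X → Prop)
    (W : Finset C) (a : ℕ) (ha : a ≤ W.card) :
    ∃ S ⊆ W, S.card = a ∧ a * cov g Q W ≤ W.card * cov g Q S := by
  classical
  unfold cov at *
  rcases Nat.eq_zero_or_pos ((Finset.univ.filter fun x : X => Q x ∧ (g x ∩ W).Nonempty).card) with h0 | hpos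
  · obtain ⟨S, hSW, hScard⟩ := Finset.exists_subset_card_eq ha
    exact ⟨S, hSW, hScard, by simp [h0]⟩
  · -- W is nonempty
    obtain ⟨x₀, hx₀⟩ := Finset.card_pos.mp hpos
    have hx₀' := Finset.mem_filter.mp hx₀
    obtain ⟨c₀, hc₀⟩ := hx₀'.2.2
    have hWne : W.Nonempty := ⟨c₀, (Finset.mem_inter.mp hc₀).2⟩
    -- witness function
    set w : X → C := fun x => if h : (g x ∩ W).Nonempty then h.choose else hWne.choose with hw
    have hwmem : ∀ x, (g x ∩ W).Nonempty → w x ∈ g x ∩ W := by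
      intro x h
      simp only [hw, dif_pos h]
      exact h.choose_spec
    set n : C → ℕ := fun c =>
      (Finset.univ.filter fun x : X => (Q x ∧ (g x ∩ W).Nonempty) ∧ w x = c).card with hn
    have hcovW : cov g Q W = ∑ c ∈ W, n c := by
      rw [cov]
      refine Finset.card_eq_sum_card_fiberwise (f := w) (t := W) ?_ |>.trans ?_
      · intro x hx
        have := (Finset.mem_filter.mp hx).2.2
        exact (Finset.mem_inter.mp (hwmem x this)).2
      · apply Finset.sum_congr rfl
        intro c _
        rw [hn, Finset.filter_filter]
    obtain ⟨S, hSW, hScard, hS⟩ := select_heavy (W.card - a) W n a (by omega)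
    refine ⟨S, hSW, hScard, ?_⟩
    have hsumS : ∑ c ∈ S, n c ≤ cov g Q S := by
      have : ∑ c ∈ S, n c
          = (Finset.univ.filter fun x : X =>
              ((Q x ∧ (g x ∩ W).Nonempty) ∧ w x ∈ S)).card := by
        rw [Finset.card_eq_sum_card_fiberwise (f := w) (t := S)
          (fun x hx => (Finset.mem_filter.mp hx).2.2)]
        refine Finset.sum_congr rfl fun c hc => ?_
        refine congrArg Finset.card ?_
        rw [Finset.filter_filter]
        ext x
        simp only [hn, Finset.mem_filter, Finset.mem_univ, true_and]
        constructor
        · rintro ⟨hP, hwc⟩; exact ⟨⟨hP, hwc ▸ hc⟩, hwc⟩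
        · rintro ⟨⟨hP, -⟩, hwc⟩; exact ⟨hP, hwc⟩
      rw [this]
      apply Finset.card_le_card
      intro x hx
      rw [Finset.mem_filter] at hx ⊢
      obtain ⟨hu, ⟨hQ, hne⟩, hwS⟩ := hx
      exact ⟨hu, hQ, w x,
        Finset.mem_inter.mpr ⟨(Finset.mem_inter.mp (hwmem x hne)).1, hwS⟩⟩
    calc a * cov g Q W = a * ∑ c ∈ W, n c := by rw [hcovW]
      _ ≤ W.card * ∑ c ∈ S, n c := hS
      _ ≤ W.card * cov g Q S := Nat.mul_le_mul_left _ hsumS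

/-- The symmetrized pairwise approval-set function. -/
def pairApprove {V C : Type*} [DecidableEq C] (A : V → Finset C) : Sym2 V → Finset C :=
  Sym2.lift ⟨fun u v => A u ∩ A v, fun u v => Finset.inter_comm _ _⟩

lemma ccScore_eq_cov {V C : Type*} [Fintype V] [DecidableEq C] (A : V → Finset C)
    (W : Finset C) : ccScore A W = cov A (fun _ : V => True) W := by
  classical
  rw [ccScore, cov]
  apply congrArg
  ext v
  simp

lemma pairsScore_eq_cov {V C : Type*} [Fintype V] [DecidableEq C] (A : V → Finset C)
    (W : Finset C) :
    pairsScore A W = cov (pairApprove A) (fun p : Sym2 V => ¬ p.IsDiag) W := by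
  classical
  rw [pairsScore, cov, Set.ncard_eq_toFinset_card']
  apply congrArg
  rw [Set.toFinset_setOf]
  ext p
  simp only [Finset.mem_filter, Finset.mem_univ, true_and]
  refine and_congr_right fun _ => ?_
  induction p using Sym2.ind with
  | _ u v =>
    have hlift : pairApprove A s(u, v) = A u ∩ A v := rfl
    constructor
    · rintro ⟨u', v', heq, c, hc⟩
      refine ⟨c, ?_⟩
      rw [hlift]
      rcases Sym2.eq_iff.mp heq with ⟨h1, h2⟩ | ⟨h1, h2⟩ <;> subst h1 <;> subst h2
      · exact hc
      · simp only [Finset.mem_inter] at hc ⊢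
        tauto
    · rintro ⟨c, hc⟩
      exact ⟨u, v, rfl, c, by rw [hlift] at hc; exact hc⟩

lemma maxScore_attained {C : Type*} [Fintype C] [DecidableEq C] (f : Finset C → ℕ) (k : ℕ)
    (h : k ≤ Fintype.card C) : ∃ W : Finset C, W.card = k ∧ maxScore f k = f W := by
  obtain ⟨W, hW, hcard⟩ :=
    Finset.exists_subset_card_eq (s := (Finset.univ : Finset C)) (by simpa using h)
  have hne : ((Finset.univ : Finset C).powersetCard k).Nonempty :=
    ⟨W, Finset.mem_powersetCard.mpr ⟨hW, hcard⟩⟩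
  obtain ⟨W₀, hW₀, hsup⟩ := Finset.exists_mem_eq_sup _ hne f
  exact ⟨W₀, (Finset.mem_powersetCard.mp hW₀).2, hsup⟩

/-- **Simultaneous approximation of `Pairs` and `CC`.** For every `α ∈ [0,1]` and every
election with committee size `k`, there is a feasible committee (of size exactly `k`)
that simultaneously satisfies `(⌈αk⌉/k)`-Pairs and `(⌊(1−α)k⌋/k)`-CC. -/
theorem pairs_cc_simultaneous {V C : Type*} [Fintype V] [Fintype C] [DecidableEq C]
    (A : V → Finset C) (k : ℕ) (hk : 0 < k) (hkm : k ≤ Fintype.card C)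
    (α : ℝ) (hα0 : 0 ≤ α) (hα1 : α ≤ 1) :
    ∃ W : Finset C, W.card = k ∧
      ((⌈α * (k : ℝ)⌉₊ : ℝ) / (k : ℝ)) * (maxScore (pairsScore A) k : ℝ)
        ≤ (pairsScore A W : ℝ) ∧
      ((⌊(1 - α) * (k : ℝ)⌋₊ : ℝ) / (k : ℝ)) * (maxScore (ccScore A) k : ℝ)
        ≤ (ccScore A W : ℝ) := by
  classical
  set a := ⌈α * (k : ℝ)⌉₊ with ha
  set b := ⌊(1 - α) * (k : ℝ)⌋₊ with hb
  have hkR : (0 : ℝ) < (k : ℝ) := by exact_mod_cast hk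
  have h1 : (a : ℝ) < α * k + 1 := Nat.ceil_lt_add_one (by positivity)
  have h2 : (b : ℝ) ≤ (1 - α) * k := Nat.floor_le (by nlinarith)
  have hab : a + b ≤ k := by
    have hlt : ((a + b : ℕ) : ℝ) < ((k + 1 : ℕ) : ℝ) := by push_cast; nlinarith
    exact Nat.lt_succ_iff.mp (by exact_mod_cast hlt)
  have hak : a ≤ k := by
    rw [ha]
    refine Nat.ceil_le.mpr ?_
    nlinarith
  have hbk : b ≤ k := le_trans (Nat.le_add_left _ _) hab
  obtain ⟨WP, hWPcard, hWPmax⟩ := maxScore_attained (pairsScore A) k hkm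
  obtain ⟨WC, hWCcard, hWCmax⟩ := maxScore_attained (ccScore A) k hkm
  obtain ⟨S, hSWP, hScard, hSineq⟩ :=
    cov_select (pairApprove A) (fun p : Sym2 V => ¬ p.IsDiag) WP a (hWPcard ▸ hak)
  obtain ⟨T, hTWC, hTcard, hTineq⟩ :=
    cov_select A (fun _ : V => True) WC b (hWCcard ▸ hbk)
  have hSTcard : (S ∪ T).card ≤ k :=
    le_trans (Finset.card_union_le _ _) (by omega)
  obtain ⟨W, hSTW, hWuniv, hWcard⟩ :=
    Finset.exists_subsuperset_card_eq (Finset.subset_univ (S ∪ T)) hSTcard (by simpa using hkm)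
  refine ⟨W, hWcard, ?_, ?_⟩
  · -- Pairs bound
    have hSW : S ⊆ W := (Finset.subset_union_left).trans hSTW
    have hnat : a * pairsScore A WP ≤ k * pairsScore A W := by
      rw [pairsScore_eq_cov, pairsScore_eq_cov]
      calc a * cov (pairApprove A) (fun p : Sym2 V => ¬ p.IsDiag) WP
          ≤ WP.card * cov (pairApprove A) (fun p : Sym2 V => ¬ p.IsDiag) S := hSineq
        _ = k * cov (pairApprove A) (fun p : Sym2 V => ¬ p.IsDiag) S := by rw [hWPcard]
        _ ≤ k * cov (pairApprove A) (fun p : Sym2 V => ¬ p.IsDiag) W :=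
            Nat.mul_le_mul_left _ (cov_mono _ _ hSW)
    rw [hWPmax, div_mul_eq_mul_div, div_le_iff₀ hkR]
    calc (a : ℝ) * (pairsScore A WP : ℝ) ≤ (k : ℝ) * (pairsScore A W : ℝ) := by
          exact_mod_cast hnat
      _ = (pairsScore A W : ℝ) * (k : ℝ) := mul_comm _ _
  · -- CC bound
    have hTW : T ⊆ W := (Finset.subset_union_right).trans hSTW
    have hnat : b * ccScore A WC ≤ k * ccScore A W := by
      rw [ccScore_eq_cov, ccScore_eq_cov]
      calc b * cov A (fun _ : V => True) WC
          ≤ WC.card * cov A (fun _ : V => True) T := hTineq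
        _ = k * cov A (fun _ : V => True) T := by rw [hWCcard]
        _ ≤ k * cov A (fun _ : V => True) W := Nat.mul_le_mul_left _ (cov_mono _ _ hTW)
    rw [hWCmax, div_mul_eq_mul_div, div_le_iff₀ hkR]
    calc (b : ℝ) * (ccScore A WC : ℝ) ≤ (k : ℝ) * (ccScore A W : ℝ) := by
          exact_mod_cast hnat
      _ = (ccScore A W : ℝ) * (k : ℝ) := mul_comm _ _
end
end

section
/- For every ε > 0 there exists an election instance ℰ = (V, A, k) such that for every feasible committee W (|W| = k), Pairs(W) / P* + AV(W) / A* ≤ 1 + ε, where P* = max{Pairs(W') : |W'| = k} and A* = max{AV(W') : |W'| = k}. Consequently, no voting rule can simultaneously satisfy α-Pairs and β-AV with α + β > 1. -/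
noncomputable section

namespace PairsAV
open Finset



def inst (b k : ℕ) : Fin (b + 2*k) → Finset (Fin (2*k)) := fun v =>
  if v.val < b then Finset.univ.filter (fun c => c.val < k)
  else if v.val < b + k then Finset.univ.filter (fun c => c.val = v.val - b + k)
  else Finset.univ.filter (fun c => c.val = v.val - b)

lemma mem_inst_iff (b k : ℕ) (v : Fin (b + 2*k)) (c : Fin (2*k)) :
    c ∈ inst b k v ↔
      (v.val < b ∧ c.val < k) ∨
      (b ≤ v.val ∧ v.val < b + k ∧ c.val = v.val - b + k) ∨
      (b + k ≤ v.val ∧ c.val = v.val - b) := by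
  unfold inst
  split_ifs with h1 h2 <;> simp <;> omega

lemma card_filter_lt (N d : ℕ) (hd : d ≤ N) :
    ((Finset.univ : Finset (Fin N)).filter (fun c => c.val < d)).card = d := by
  have key : ((Finset.univ : Finset (Fin N)).filter (fun c => c.val < d)).card
      = (Finset.range d).card := by
    apply Finset.card_bij (fun c _ => (c : Fin N).val)
    · intro c hc; simp only [mem_filter] at hc; simp [Finset.mem_range]; omega
    · intro c1 h1 c2 h2 h; exact Fin.ext h
    · intro x hx
      simp only [Finset.mem_range] at hx
      exact ⟨⟨x, by omega⟩, by simp; omega, rfl⟩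
  rw [key, Finset.card_range]

lemma approvers_ge (b k : ℕ) (c : Fin (2*k)) (hc : k ≤ c.val) :
    (Finset.univ.filter (fun v => c ∈ inst b k v)) =
      ({⟨c.val - k + b, by have := c.isLt; omega⟩, ⟨c.val + b, by have := c.isLt; omega⟩} :
        Finset (Fin (b + 2*k))) := by
  have hck := c.isLt
  ext v
  have hv := v.isLt
  simp only [Finset.mem_filter, Finset.mem_univ, true_and, Finset.mem_insert,
    Finset.mem_singleton, mem_inst_iff, Fin.ext_iff]
  omega

lemma approvers_lt (b k : ℕ) (c : Fin (2*k)) (hc : c.val < k) :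
    (Finset.univ.filter (fun v => c ∈ inst b k v)) =
      (Finset.univ : Finset (Fin (b + 2*k))).filter (fun v => v.val < b) := by
  apply Finset.filter_congr
  intro v _
  simp only [mem_inst_iff]
  omega

lemma av_eq (b k : ℕ) (W : Finset (Fin (2*k))) :
    avScore (inst b k) W =
      b * (W.filter (fun c => c.val < k)).card
        + 2 * (W.filter (fun c => k ≤ c.val)).card := by
  unfold avScore
  have h1 : ∀ v : Fin (b + 2*k), (inst b k v ∩ W).card
      = ∑ c ∈ W, if c ∈ inst b k v then 1 else 0 := by
    intro v
    rw [← Finset.card_filter]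
    congr 1
    rw [Finset.inter_comm, ← Finset.filter_mem_eq_inter]
  simp_rw [h1]
  rw [Finset.sum_comm]
  have h2 : ∀ c ∈ W, (∑ v : Fin (b + 2*k), if c ∈ inst b k v then 1 else 0)
      = if c.val < k then b else 2 := by
    intro c _
    rw [← Finset.card_filter]
    by_cases hc : c.val < k
    · rw [approvers_lt b k c hc, card_filter_lt _ _ (by omega), if_pos hc]
    · rw [approvers_ge b k c (by omega), if_neg hc]
      rw [Finset.card_insert_of_notMem, Finset.card_singleton]
      simp only [Finset.mem_singleton, Fin.ext_iff]
      have := c.isLt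
      omega
  rw [Finset.sum_congr rfl h2]
  rw [← Finset.sum_filter_add_sum_filter_not W (fun c => c.val < k)]
  have h3 : ∀ c ∈ W.filter (fun c => c.val < k),
      (if c.val < k then b else 2) = b := by
    intro c hc; simp only [mem_filter] at hc; rw [if_pos hc.2]
  have h4 : ∀ c ∈ W.filter (fun c => ¬ c.val < k),
      (if c.val < k then b else 2) = 2 := by
    intro c hc; simp only [mem_filter] at hc; rw [if_neg hc.2]
  rw [Finset.sum_congr rfl h3, Finset.sum_congr rfl h4, Finset.sum_const, Finset.sum_const]
  have h5 : W.filter (fun c => ¬ c.val < k) = W.filter (fun c => k ≤ c.val) := by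
    apply Finset.filter_congr; intro c _; simp [Nat.not_lt]
  rw [h5]
  simp [mul_comm]


def gpair (b k : ℕ) : Fin (2*k) → Sym2 (Fin (b + 2*k)) := fun c =>
  s(⟨c.val - k + b, by have := c.isLt; omega⟩, ⟨c.val + b, by have := c.isLt; omega⟩)

lemma card_sym2_not_diag {α : Type*} [DecidableEq α] (s : Finset α) :
    (s.sym2.filter (fun p => ¬ p.IsDiag)).card = s.card.choose 2 := by
  have h1 := Finset.card_sym2 s
  have h2 : (s.sym2.filter (fun p => p.IsDiag)).card = s.card := by
    symm
    apply Finset.card_bij (fun a _ => s(a, a))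
    · intro a ha
      simp only [Finset.mem_filter, Finset.mem_sym2_iff, Sym2.mem_iff, Sym2.mk_isDiag_iff]
      aesop
    · intro a1 _ a2 _ h
      rcases Sym2.eq_iff.mp h with ⟨h, _⟩ | ⟨h, _⟩ <;> exact h
    · intro p hp
      induction p using Sym2.ind with | _ x y =>
      simp only [Finset.mem_filter, Sym2.mk_isDiag_iff, Finset.mem_sym2_iff] at hp
      obtain ⟨hmem, hxy⟩ := hp
      exact ⟨x, hmem x (by simp), by rw [hxy]⟩
  have h3 := Finset.card_filter_add_card_filter_not (s := s.sym2)
    (p := fun p => p.IsDiag)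
  have h4 := Nat.choose_succ_succ s.card 1
  norm_num [Nat.choose_one_right] at h4
  omega

lemma pairs_eq (b k : ℕ) (W : Finset (Fin (2*k))) :
    pairsScore (inst b k) W =
      (if (W.filter (fun c => c.val < k)).Nonempty then b.choose 2 else 0)
        + (W.filter (fun c => k ≤ c.val)).card := by
  classical
  unfold pairsScore
  set BP : Finset (Sym2 (Fin (b + 2*k))) :=
    ((Finset.univ.filter (fun v : Fin (b + 2*k) => v.val < b)).sym2.filter
      (fun p => ¬ p.IsDiag)) with hBP
  set F : Finset (Sym2 (Fin (b + 2*k))) :=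
    (if (W.filter (fun c => c.val < k)).Nonempty then BP else ∅)
      ∪ (W.filter (fun c => k ≤ c.val)).image (gpair b k) with hF
  have key : ∀ u v : Fin (b + 2*k), u ≠ v →
      ((inst b k u ∩ inst b k v ∩ W).Nonempty ↔ s(u, v) ∈ F) := by
    intro u v hne
    have huv : u.val ≠ v.val := fun h => hne (Fin.ext h)
    have hu := u.isLt; have hv := v.isLt
    constructor
    · intro h
      obtain ⟨c, hc⟩ := h
      simp only [Finset.mem_inter] at hc
      obtain ⟨⟨hcu, hcv⟩, hcW⟩ := hc
      rw [mem_inst_iff] at hcu hcv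
      have hck := c.isLt
      by_cases hc2 : c.val < k
      · have hXne : (W.filter (fun c => c.val < k)).Nonempty :=
          ⟨c, Finset.mem_filter.mpr ⟨hcW, hc2⟩⟩
        apply Finset.mem_union_left
        rw [if_pos hXne]
        simp only [hBP, Finset.mem_filter, Finset.mem_sym2_iff, Sym2.mk_isDiag_iff]
        refine ⟨?_, hne ∘ Fin.ext ∘ congrArg Fin.val⟩
        · intro a ha
          simp only [Sym2.mem_iff] at ha
          simp only [Finset.mem_filter, Finset.mem_univ, true_and]
          rcases ha with rfl | rfl <;> omega
      · apply Finset.mem_union_right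
        rw [Finset.mem_image]
        refine ⟨c, Finset.mem_filter.mpr ⟨hcW, by omega⟩, ?_⟩
        unfold gpair
        rw [Sym2.eq_iff]
        simp only [Fin.ext_iff]
        omega
    · intro h
      rw [Finset.mem_union] at h
      rcases h with h | h
      · split_ifs at h with hXne
        · simp only [hBP, Finset.mem_filter, Finset.mem_sym2_iff] at h
          obtain ⟨hmem, hdiag⟩ := h
          have hu' := hmem u (by simp)
          have hv' := hmem v (by simp)
          simp only [Finset.mem_filter, Finset.mem_univ, true_and] at hu' hv'
          obtain ⟨c, hcW⟩ := hXne
          rw [Finset.mem_filter] at hcW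
          refine ⟨c, ?_⟩
          simp only [Finset.mem_inter, mem_inst_iff]
          exact ⟨⟨Or.inl ⟨hu', hcW.2⟩, Or.inl ⟨hv', hcW.2⟩⟩, hcW.1⟩
        · exact absurd h (Finset.notMem_empty _)
      · obtain ⟨c, hcmem, hgc⟩ := Finset.mem_image.mp h
        rw [Finset.mem_filter] at hcmem
        have hck := c.isLt
        unfold gpair at hgc
        rw [Sym2.eq_iff] at hgc
        simp only [Fin.ext_iff] at hgc
        refine ⟨c, ?_⟩
        simp only [Finset.mem_inter, mem_inst_iff]
        refine ⟨⟨?_, ?_⟩, hcmem.1⟩ <;> omega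
  have hsetEq : {p : Sym2 (Fin (b + 2*k)) | ¬ p.IsDiag ∧
      ∃ u v, p = s(u, v) ∧ (inst b k u ∩ inst b k v ∩ W).Nonempty} = ↑F := by
    ext p
    induction p using Sym2.ind with | _ u v =>
    simp only [Set.mem_setOf_eq, Finset.mem_coe, Sym2.mk_isDiag_iff]
    constructor
    · rintro ⟨hdiag, u', v', heq, hsh⟩
      rcases Sym2.eq_iff.mp heq with ⟨rfl, rfl⟩ | ⟨rfl, rfl⟩
      · exact (key u v hdiag).mp hsh
      · rw [Finset.inter_comm (inst b k v) (inst b k u)] at hsh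
        exact (key u v hdiag).mp hsh
    · intro h
      have hdiag : ¬ (u = v) := by
        have h' := h
        rw [Finset.mem_union] at h'
        rcases h' with h' | h'
        · split_ifs at h' with hXne
          · intro he
            exact (Finset.mem_filter.mp h').2 (Sym2.mk_isDiag_iff.mpr he)
          · exact absurd h' (Finset.notMem_empty _)
        · obtain ⟨c, hcmem, hgc⟩ := Finset.mem_image.mp h'
          rw [Finset.mem_filter] at hcmem
          have hck := c.isLt
          unfold gpair at hgc
          rw [Sym2.eq_iff] at hgc
          simp only [Fin.ext_iff] at hgc
          intro he
          have : u.val = v.val := congrArg Fin.val he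
          omega
      exact ⟨hdiag, u, v, rfl, (key u v hdiag).mpr h⟩
  rw [hsetEq, Set.ncard_coe_finset, hF]
  have hdisj : Disjoint (if (W.filter (fun c => c.val < k)).Nonempty then BP else ∅)
      ((W.filter (fun c => k ≤ c.val)).image (gpair b k)) := by
    split_ifs
    · rw [Finset.disjoint_left]
      intro p hp hp2
      obtain ⟨c, hcmem, rfl⟩ := Finset.mem_image.mp hp2
      rw [Finset.mem_filter] at hcmem
      have hck := c.isLt
      have h1 := (Finset.mem_filter.mp hp).1
      rw [Finset.mem_sym2_iff] at h1
      have h2 := h1 ⟨c.val + b, by omega⟩ (by unfold gpair; simp)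
      simp only [Finset.mem_filter, Finset.mem_univ, true_and] at h2
      omega
    · simp
  rw [Finset.card_union_of_disjoint hdisj]
  congr 1
  · split_ifs
    · rw [hBP, card_sym2_not_diag, card_filter_lt _ _ (by omega)]
    · exact Finset.card_empty
  · apply Finset.card_image_of_injOn
    intro c1 h1 c2 h2 h
    simp only [Finset.coe_filter, Set.mem_setOf_eq] at h1 h2
    have := c1.isLt; have := c2.isLt
    unfold gpair at h
    rw [Sym2.eq_iff] at h
    simp only [Fin.ext_iff] at h
    exact Fin.ext (by omega)



lemma ratio_bound (B k i : ℝ) (hB : 1 ≤ B) (hk : 0 < k) (hik : i ≤ k) :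
    (B + (k - i))/(B + k - 1) + i/k ≤ 1 + B/k := by
  have hD : 0 < B + k - 1 := by linarith
  rw [div_add_div _ _ (ne_of_gt hD) (ne_of_gt hk),
    show 1 + B/k = (k+B)/k by field_simp, div_le_div_iff₀ (by positivity) hk]
  nlinarith [mul_nonneg (mul_nonneg hk.le (by linarith : (0:ℝ) ≤ B - 1))
    (by linarith : (0:ℝ) ≤ B + k - i)]

lemma card_filter_interval (N a d : ℕ) (hd : d ≤ N) :
    ((Finset.univ : Finset (Fin N)).filter (fun c => a ≤ c.val ∧ c.val < d)).card
      = d - a := by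
  have key : ((Finset.univ : Finset (Fin N)).filter (fun c => a ≤ c.val ∧ c.val < d)).card
      = (Finset.Ico a d).card := by
    apply Finset.card_bij (fun c _ => (c : Fin N).val)
    · intro c hc; simp only [mem_filter] at hc; simp [Finset.mem_Ico]; omega
    · intro c1 h1 c2 h2 h; exact Fin.ext h
    · intro x hx
      simp only [Finset.mem_Ico] at hx
      exact ⟨⟨x, by omega⟩, by simp; omega, rfl⟩
  rw [key, Nat.card_Ico]

/-- The pairs-optimal committee: candidate `0` plus candidates `k+1, …, 2k-1`. -/
def W0 (k : ℕ) : Finset (Fin (2*k)) :=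
  Finset.univ.filter (fun c => c.val < 1 ∨ (k + 1 ≤ c.val ∧ c.val < 2*k))

/-- The AV-optimal committee: candidates `0, …, k-1`. -/
def W1 (k : ℕ) : Finset (Fin (2*k)) :=
  Finset.univ.filter (fun c => c.val < k)

lemma W0_card (k : ℕ) (hk : 1 ≤ k) : (W0 k).card = k := by
  unfold W0
  rw [Finset.filter_or, Finset.card_union_of_disjoint]
  · rw [card_filter_lt _ _ (by omega), card_filter_interval _ _ _ (le_refl _)]
    omega
  · rw [Finset.disjoint_left]
    intro c hc1 hc2
    simp only [mem_filter] at hc1 hc2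
    omega

lemma W0_X (k : ℕ) (hk : 1 ≤ k) :
    ((W0 k).filter (fun c => c.val < k)).Nonempty := by
  refine ⟨⟨0, by omega⟩, ?_⟩
  unfold W0
  simp only [Finset.mem_filter, Finset.mem_univ, true_and]
  omega

lemma W0_Y (k : ℕ) (hk : 1 ≤ k) :
    ((W0 k).filter (fun c => k ≤ c.val)).card = k - 1 := by
  unfold W0
  rw [Finset.filter_filter]
  have : ((Finset.univ : Finset (Fin (2*k))).filter
      (fun c => (c.val < 1 ∨ (k + 1 ≤ c.val ∧ c.val < 2*k)) ∧ k ≤ c.val)) =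
      (Finset.univ.filter (fun c => k + 1 ≤ c.val ∧ c.val < 2*k)) := by
    apply Finset.filter_congr
    intro c _
    constructor
    · intro h; omega
    · intro h; omega
  rw [this, card_filter_interval _ _ _ (le_refl _)]
  omega

lemma W1_card (k : ℕ) : (W1 k).card = k := by
  unfold W1; exact card_filter_lt _ _ (by omega)

lemma W1_X (k : ℕ) : ((W1 k).filter (fun c => c.val < k)).card = k := by
  unfold W1
  rw [Finset.filter_filter]
  have : ((Finset.univ : Finset (Fin (2*k))).filter (fun c => c.val < k ∧ c.val < k)) =
      (Finset.univ.filter (fun c => c.val < k)) := by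
    apply Finset.filter_congr; intro c _; simp
  rw [this, card_filter_lt _ _ (by omega)]

lemma W1_Y (k : ℕ) : ((W1 k).filter (fun c => k ≤ c.val)).card = 0 := by
  unfold W1
  rw [Finset.filter_filter]
  rw [Finset.filter_false_of_mem, Finset.card_empty]
  intro c _
  omega

end PairsAV

open PairsAV Finset

/-- **Tight trade-off between `Pairs` and `AV`.** For every `ε > 0` there exists an
election instance (with `n` voters, `m` candidates, committee size `0 < k ≤ m`, and
positive optimal `Pairs` and `AV` scores `P*` and `A*`) such that every feasible
committee `W` (of size `k`) satisfies `Pairs(W)/P* + AV(W)/A* ≤ 1 + ε`. Consequently,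
no voting rule can satisfy `α`-Pairs and `β`-AV with `α + β > 1`. -/
theorem pairs_av_tradeoff_ub (ε : ℝ) (hε : 0 < ε) :
    ∃ (n m k : ℕ) (A : Fin n → Finset (Fin m)),
      0 < k ∧ k ≤ m ∧
      0 < maxScore (pairsScore A) k ∧ 0 < maxScore (avScore A) k ∧
      ∀ W : Finset (Fin m), W.card = k →
        (pairsScore A W : ℝ) / (maxScore (pairsScore A) k : ℝ) +
          (avScore A W : ℝ) / (maxScore (avScore A) k : ℝ) ≤ 1 + ε := by
  -- parameters
  set b : ℕ := ⌈(4:ℝ)/ε⌉₊ + 4 with hbdef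
  set B : ℕ := b.choose 2 with hBdef
  set k : ℕ := B * (⌈(2:ℝ)/ε⌉₊ + 1) with hkdef
  have hb4 : 4 ≤ b := by omega
  have hB1 : 6 ≤ B := by
    calc (6:ℕ) = (4).choose 2 := by decide
    _ ≤ b.choose 2 := Nat.choose_le_choose 2 hb4
  have hk1 : 1 ≤ k := by
    have : 1 ≤ ⌈(2:ℝ)/ε⌉₊ + 1 := by omega
    calc 1 = 1 * 1 := by omega
    _ ≤ B * (⌈(2:ℝ)/ε⌉₊ + 1) := Nat.mul_le_mul (by omega) this
  -- real parameter bounds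
  have hbR : (0:ℝ) < b := by positivity
  have hkR : (0:ℝ) < k := by exact_mod_cast hk1
  have hBR : (1:ℝ) ≤ B := by exact_mod_cast le_trans (by norm_num) hB1
  have hceil4 : (4:ℝ)/ε ≤ b := by
    calc (4:ℝ)/ε ≤ ⌈(4:ℝ)/ε⌉₊ := Nat.le_ceil _
    _ ≤ b := by exact_mod_cast Nat.le_add_right _ 4
  have h2b : (2:ℝ)/b ≤ ε/2 := by
    rw [div_le_div_iff₀ hbR (by norm_num)]
    have : (4:ℝ) ≤ ε * b := by
      rw [div_le_iff₀ hε] at hceil4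
      linarith
    linarith
  have hBk : (B:ℝ)/k ≤ ε/2 := by
    rw [div_le_div_iff₀ hkR (by norm_num)]
    have hm : (2:ℝ)/ε ≤ ⌈(2:ℝ)/ε⌉₊ := Nat.le_ceil _
    have hkR' : (k:ℝ) = B * (⌈(2:ℝ)/ε⌉₊ + 1) := by
      rw [hkdef]; push_cast; ring
    rw [div_le_iff₀ hε] at hm
    rw [hkR']
    nlinarith [hBR, hε.le, Nat.le_ceil ((2:ℝ)/ε)]
  clear_value b B k
  refine ⟨b + 2*k, 2*k, k, inst b k, hk1, by omega, ?_, ?_, ?_⟩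
  · -- positivity of max pairs
    have hmem : W0 k ∈ (Finset.univ : Finset (Fin (2*k))).powersetCard k :=
      Finset.mem_powersetCard.mpr ⟨Finset.subset_univ _, W0_card k hk1⟩
    have h := Finset.le_sup (f := pairsScore (inst b k)) hmem
    have hval : pairsScore (inst b k) (W0 k) = B + (k - 1) := by
      rw [pairs_eq, if_pos (W0_X k hk1), W0_Y k hk1, hBdef]
    unfold maxScore
    omega
  · have hmem : W1 k ∈ (Finset.univ : Finset (Fin (2*k))).powersetCard k :=
      Finset.mem_powersetCard.mpr ⟨Finset.subset_univ _, W1_card k⟩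
    have h := Finset.le_sup (f := avScore (inst b k)) hmem
    have hval : avScore (inst b k) (W1 k) = b * k := by
      rw [av_eq, W1_X k, W1_Y k]; ring
    unfold maxScore
    have : 0 < b * k := Nat.mul_pos (by omega) (by omega)
    omega
  · intro W hW
    -- notation
    set i : ℕ := (W.filter (fun c => c.val < k)).card with hidef
    set j : ℕ := (W.filter (fun c => k ≤ c.val)).card with hjdef
    have hij : i + j = k := by
      have h := Finset.card_filter_add_card_filter_not
        (s := W) (p := fun c => c.val < k)
      have h5 : W.filter (fun c => ¬ c.val < k) = W.filter (fun c => k ≤ c.val) := by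
        apply Finset.filter_congr; intro c _; simp [Nat.not_lt]
      rw [h5] at h
      rw [hidef, hjdef, h, hW]
    -- lower bounds on the max scores
    have hPmem : W0 k ∈ (Finset.univ : Finset (Fin (2*k))).powersetCard k :=
      Finset.mem_powersetCard.mpr ⟨Finset.subset_univ _, W0_card k hk1⟩
    have hPle := Finset.le_sup (f := pairsScore (inst b k)) hPmem
    have hPval : pairsScore (inst b k) (W0 k) = B + (k - 1) := by
      rw [pairs_eq, if_pos (W0_X k hk1), W0_Y k hk1, hBdef]
    have hP : B + (k-1) ≤ maxScore (pairsScore (inst b k)) k := by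
      unfold maxScore; omega
    have hAmem : W1 k ∈ (Finset.univ : Finset (Fin (2*k))).powersetCard k :=
      Finset.mem_powersetCard.mpr ⟨Finset.subset_univ _, W1_card k⟩
    have hAle := Finset.le_sup (f := avScore (inst b k)) hAmem
    have hAval : avScore (inst b k) (W1 k) = b * k := by
      rw [av_eq, W1_X k, W1_Y k]; ring
    have hA : b * k ≤ maxScore (avScore (inst b k)) k := by
      unfold maxScore; omega
    -- real denominators
    set P : ℕ := maxScore (pairsScore (inst b k)) k with hPdef
    set A : ℕ := maxScore (avScore (inst b k)) k with hAdef
    clear_value P A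
    clear hPle hAle hPval hAval hPmem hAmem
    have hDpos : (0:ℝ) < (B:ℝ) + k - 1 := by
      have : (1:ℝ) ≤ k := by exact_mod_cast hk1
      linarith
    have hPpos : (0:ℝ) < P := by
      have : (0:ℕ) < B + (k-1) := by omega
      exact_mod_cast lt_of_lt_of_le this hP
    have hApos : (0:ℝ) < A := by
      have h1 : (0:ℕ) < b * k := by positivity
      exact_mod_cast lt_of_lt_of_le h1 hA
    have hPR : ((B:ℝ) + k - 1) ≤ P := by
      have : ((B + (k-1) : ℕ) : ℝ) ≤ P := by exact_mod_cast hP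
      push_cast [Nat.cast_sub hk1] at this
      linarith
    have hAR : ((b:ℝ) * k) ≤ A := by exact_mod_cast hA
    have hav : avScore (inst b k) W = b * i + 2 * j := av_eq b k W
    have hkbpos : (0:ℝ) < (k:ℝ) * b := by positivity
    -- step 1: replace denominators
    have hAR' : ((k:ℝ) * b) ≤ A := by rw [mul_comm]; exact hAR
    have step1 : (pairsScore (inst b k) W : ℝ) / P + (avScore (inst b k) W : ℝ) / A ≤
        (pairsScore (inst b k) W : ℝ) / ((B:ℝ) + k - 1) +
          (avScore (inst b k) W : ℝ) / ((k:ℝ) * b) :=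
      add_le_add (div_le_div_of_nonneg_left (Nat.cast_nonneg _) hDpos hPR)
        (div_le_div_of_nonneg_left (Nat.cast_nonneg _) hkbpos hAR')
    refine le_trans step1 ?_
    have hik : (i:ℝ) ≤ k := by exact_mod_cast (by omega : i ≤ k)
    have hjk : (j:ℝ) ≤ k := by exact_mod_cast (by omega : j ≤ k)
    have hji : (j:ℝ) = (k:ℝ) - i := by
      have : (i:ℝ) + j = k := by exact_mod_cast hij
      linarith
    have havR : (avScore (inst b k) W : ℝ) = b * i + 2 * j := by
      rw [hav]; push_cast; ring
    have hsplit : ((b:ℝ) * i + 2 * j) / ((k:ℝ) * b) = i / k + (2*j) / (k*b) := by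
      field_simp
    have h2jb : (2*(j:ℝ)) / ((k:ℝ)*b) ≤ 2/b := by
      rw [div_le_div_iff₀ hkbpos hbR]
      have hmul := mul_le_mul_of_nonneg_right hjk hbR.le
      linarith
    by_cases hi0 : i = 0
    · -- no block candidate
      have hXempty : ¬ ((W.filter (fun c => c.val < k)).Nonempty) := by
        rw [Finset.nonempty_iff_ne_empty]
        simp only [ne_eq, not_not]
        rw [← Finset.card_eq_zero, ← hidef, hi0]
      have hpairs : pairsScore (inst b k) W = j := by
        rw [pairs_eq, if_neg hXempty, ← hjdef]; omega
      rw [hpairs, havR, hsplit]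
      have h1 : (j:ℝ) / ((B:ℝ) + k - 1) ≤ 1 := by
        rw [div_le_one hDpos]
        have : (j:ℝ) ≤ k := hjk
        linarith [hBR]
      have h2 : (i:ℝ)/k = 0 := by rw [hi0]; simp
      rw [h2]
      linarith [h2jb, h2b]
    · -- at least one block candidate
      have hXne : (W.filter (fun c => c.val < k)).Nonempty := by
        rw [← Finset.card_pos, ← hidef]; omega
      have hpairs : pairsScore (inst b k) W = B + j := by
        rw [pairs_eq, if_pos hXne, ← hjdef, hBdef]
      rw [hpairs, havR, hsplit]
      have hcast : ((B + j : ℕ) : ℝ) = (B:ℝ) + j := by push_cast; ring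
      rw [hcast]
      have t2 : ((B:ℝ) + j) / ((B:ℝ) + k - 1) + (i:ℝ)/k ≤ 1 + (B:ℝ)/k := by
        rw [hji]
        exact ratio_bound (B:ℝ) (k:ℝ) (i:ℝ) hBR hkR hik
      linarith [h2jb, h2b, hBk, t2]

end
end

section
/- For every ε > 0 there exists an election instance ℰ = (V, A, k) such that for every feasible committee W (|W| = k), Pairs(W) / P* + CC(W) / C* ≤ 1 + ε, where P* = max{Pairs(W') : |W'| = k} and C* = max{CC(W') : |W'| = k}. Consequently, no voting rule can simultaneously satisfy α-Pairs and β-CC with α + β > 1. -/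
noncomputable section

namespace PairsCC

open Finset
def kk (p : ℕ) : ℕ := p * p + p
def nn (p s : ℕ) : ℕ := p * p + kk p * s
def mm (p : ℕ) : ℕ := 2 * kk p
def onLine (p i c : ℕ) : Bool :=
  if c < p * p then
    decide ((↑(i % p) : ZMod p) = (↑(c / p) : ZMod p) * (↑(i / p) : ZMod p) + (↑(c % p) : ZMod p))
  else
    decide ((↑(i / p) : ZMod p) = (↑(c - p * p) : ZMod p))
def approves (p s i c : ℕ) : Bool :=
  if i < p * p then decide (c < p * p + p) && onLine p i c
  else decide (c = p * p + p + (i - p * p) / s)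
def appr (p s : ℕ) : Fin (nn p s) → Finset (Fin (mm p)) := fun i =>
  Finset.univ.filter fun c => approves p s i.val c.val = true

variable {p s : ℕ}

lemma mem_appr {i : Fin (nn p s)} {c : Fin (mm p)} :
    c ∈ appr p s i ↔ approves p s i.val c.val = true := by simp [appr]

lemma grid_inj (hp : 0 < p) {i j : ℕ} (hi : i < p * p) (hj : j < p * p)
    (hx : (↑(i / p) : ZMod p) = (↑(j / p) : ZMod p))
    (hy : (↑(i % p) : ZMod p) = (↑(j % p) : ZMod p)) : i = j := by
  haveI : NeZero p := ⟨hp.ne'⟩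
  have h1 : i / p < p := Nat.div_lt_iff_lt_mul hp |>.mpr hi
  have h2 : j / p < p := Nat.div_lt_iff_lt_mul hp |>.mpr hj
  have hx' : i / p = j / p := by
    have := congrArg ZMod.val hx
    rwa [ZMod.val_cast_of_lt h1, ZMod.val_cast_of_lt h2] at this
  have hy' : i % p = j % p := by
    have := congrArg ZMod.val hy
    rwa [ZMod.val_cast_of_lt (Nat.mod_lt _ hp), ZMod.val_cast_of_lt (Nat.mod_lt _ hp)] at this
  rw [← Nat.div_add_mod i p, ← Nat.div_add_mod j p, hx', hy']

lemma exists_line (p : ℕ) (hp : p.Prime) {i j : ℕ} (hi : i < p * p) (hj : j < p * p)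
    (hij : i ≠ j) :
    ∃ c, c < p * p + p ∧ onLine p i c = true ∧ onLine p j c = true := by
  haveI : Fact p.Prime := ⟨hp⟩
  have hp0 : 0 < p := hp.pos
  set x1 : ZMod p := ↑(i / p) with hx1
  set y1 : ZMod p := ↑(i % p) with hy1
  set x2 : ZMod p := ↑(j / p) with hx2
  set y2 : ZMod p := ↑(j % p) with hy2
  by_cases hxx : x1 = x2
  · refine ⟨p * p + x1.val, by have := ZMod.val_lt x1; omega, ?_, ?_⟩
    · rw [onLine, if_neg (by omega)]
      simp only [decide_eq_true_eq, Nat.add_sub_cancel_left, ZMod.natCast_val, ZMod.cast_id]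
      exact hx1.symm
    · rw [onLine, if_neg (by omega)]
      simp only [decide_eq_true_eq, Nat.add_sub_cancel_left, ZMod.natCast_val, ZMod.cast_id]
      exact hxx.symm
  · have hd : x2 - x1 ≠ 0 := sub_ne_zero.mpr (Ne.symm hxx)
    set u : ZMod p := (y2 - y1) * (x2 - x1)⁻¹ with hu
    set w : ZMod p := y1 - u * x1 with hw
    have hu2 : u * (x2 - x1) = y2 - y1 := by
      rw [hu, mul_assoc, inv_mul_cancel₀ hd, mul_one]
    have hlt : u.val * p + w.val < p * p := by
      have h1 := ZMod.val_lt u; have h2 := ZMod.val_lt w; nlinarith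
    have hdiv : (u.val * p + w.val) / p = u.val := by
      rw [mul_comm, Nat.mul_add_div hp0, Nat.div_eq_of_lt (ZMod.val_lt w), Nat.add_zero]
    have hmod : (u.val * p + w.val) % p = w.val := by
      rw [mul_comm, Nat.mul_add_mod, Nat.mod_eq_of_lt (ZMod.val_lt w)]
    refine ⟨u.val * p + w.val, by omega, ?_, ?_⟩
    · rw [onLine, if_pos hlt]
      simp only [decide_eq_true_eq, hdiv, hmod, ZMod.natCast_val, ZMod.cast_id]
      rw [hw]; ring
    · rw [onLine, if_pos hlt]
      simp only [decide_eq_true_eq, hdiv, hmod, ZMod.natCast_val, ZMod.cast_id]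
      rw [hw]
      have h3 : y2 - y1 = u * x2 - u * x1 := by rw [← hu2]; ring
      linear_combination h3

lemma line_supp_card (hp : p.Prime) {c : Fin (mm p)} (hc : c.val < kk p) :
    ((Finset.univ : Finset (Fin (nn p s))).filter fun i => c ∈ appr p s i).card ≤ p := by
  haveI : NeZero p := ⟨hp.pos.ne'⟩
  have hcard : (Finset.univ : Finset (ZMod p)).card = p := by
    simp [ZMod.card]
  refine le_trans (Finset.card_le_card_of_injOn
    (fun i => if c.val < p * p then (↑(i.val / p) : ZMod p) else ↑(i.val % p))
    (fun a _ => Finset.mem_univ _) ?_) (le_of_eq hcard)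
  intro i hi j hj hf
  simp only [Finset.mem_coe, Finset.mem_filter, mem_appr] at hi hj
  -- supporters of a line are grid voters
  have hgrid : ∀ a : Fin (nn p s), approves p s a.val c.val = true → a.val < p * p := by
    intro a ha
    by_contra hcon
    rw [approves, if_neg hcon, decide_eq_true_eq] at ha
    simp only [kk] at hc
    exact absurd (show p * p + p ≤ c.val by rw [ha]; exact Nat.le_add_right _ _) (not_le.mpr hc)
  have hgi := hgrid i hi.2
  have hgj := hgrid j hj.2
  have honi : onLine p i.val c.val = true := by
    rw [approves, if_pos hgi, Bool.and_eq_true] at hi; exact hi.2.2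
  have honj : onLine p j.val c.val = true := by
    rw [approves, if_pos hgj, Bool.and_eq_true] at hj; exact hj.2.2
  apply Fin.ext
  by_cases hcc : c.val < p * p
  · rw [onLine, if_pos hcc, decide_eq_true_eq] at honi honj
    simp only [if_pos hcc] at hf
    exact grid_inj hp.pos hgi hgj hf (by rw [honi, honj, hf])
  · rw [onLine, if_neg hcc, decide_eq_true_eq] at honi honj
    simp only [if_neg hcc] at hf
    exact grid_inj hp.pos hgi hgj (by rw [honi, honj]) hf

lemma cover_supp_card (hs : 1 ≤ s) {c : Fin (mm p)} (hc : ¬ c.val < kk p) :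
    ((Finset.univ : Finset (Fin (nn p s))).filter fun i => c ∈ appr p s i).card ≤ s := by
  refine le_trans (Finset.card_le_card_of_injOn (fun i => (i.val - p * p) % s)
    (fun a _ => Finset.mem_range.mpr (Nat.mod_lt _ hs)) ?_) (le_of_eq (Finset.card_range s))
  intro i hi j hj hf
  · 
    simp only [Finset.mem_coe, Finset.mem_filter, mem_appr] at hi hj
    have key : ∀ a : Fin (nn p s), approves p s a.val c.val = true →
        ¬ a.val < p * p ∧ (a.val - p * p) / s = c.val - (p * p + p) := by
      intro a ha
      by_cases hga : a.val < p * p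
      · rw [approves, if_pos hga, Bool.and_eq_true, decide_eq_true_eq] at ha
        simp only [kk] at hc
        exact absurd ha.1 hc
      · rw [approves, if_neg hga, decide_eq_true_eq] at ha
        refine ⟨hga, ?_⟩
        rw [ha, Nat.add_sub_cancel_left]
    obtain ⟨hi1, hi2⟩ := key i hi.2
    obtain ⟨hj1, hj2⟩ := key j hj.2
    apply Fin.ext
    have d1 := Nat.div_add_mod (i.val - p * p) s
    have d2 := Nat.div_add_mod (j.val - p * p) s
    rw [hi2] at d1; rw [hj2] at d2
    have hf' : (i.val - p * p) % s = (j.val - p * p) % s := hf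
    omega

lemma pairsScore_eq_card {V C : Type*} [Fintype V] [DecidableEq V] [DecidableEq C]
    (A : V → Finset C) (W : Finset C) :
    pairsScore A W = ((Finset.univ : Finset (Sym2 V)).filter fun z =>
      ¬ z.IsDiag ∧ ∃ u v : V, z = s(u, v) ∧ (A u ∩ A v ∩ W).Nonempty).card := by
  classical
  rw [pairsScore, ← Set.ncard_coe_finset]
  congr 1
  ext z
  simp

lemma pairs_upper (hp : p.Prime) (hs : 1 ≤ s) (W : Finset (Fin (mm p))) :
    pairsScore (appr p s) W ≤
      (W.filter fun c => c.val < kk p).card * Nat.choose p 2 +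
      (W.filter fun c => ¬ c.val < kk p).card * Nat.choose s 2 := by
  classical
  rw [pairsScore_eq_card]
  have hsub : ((Finset.univ : Finset (Sym2 (Fin (nn p s)))).filter fun z =>
      ¬ z.IsDiag ∧ ∃ u v, z = s(u, v) ∧ (appr p s u ∩ appr p s v ∩ W).Nonempty) ⊆
      W.biUnion fun c =>
        ((Finset.univ.filter fun i => c ∈ appr p s i).offDiag.image Sym2.mk.uncurry) := by
    intro z hz
    rw [Finset.mem_filter] at hz
    obtain ⟨-, hnd, u, v, rfl, c, hc⟩ := hz
    simp only [Finset.mem_inter] at hc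
    have huv : u ≠ v := fun h => hnd (h ▸ Sym2.mk_isDiag_iff.mpr rfl)
    rw [Finset.mem_biUnion]
    refine ⟨c, hc.2, Finset.mem_image.mpr ⟨(u, v), Finset.mem_offDiag.mpr
      ⟨Finset.mem_filter.mpr ⟨Finset.mem_univ _, hc.1.1⟩,
       Finset.mem_filter.mpr ⟨Finset.mem_univ _, hc.1.2⟩, huv⟩, rfl⟩⟩
  refine le_trans (le_trans (le_trans (le_of_eq (by congr 1; ext; simp)) (Finset.card_le_card hsub)) (Finset.card_biUnion_le)) ?_
  rw [← Finset.sum_filter_add_sum_filter_not W (fun c => c.val < kk p)]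
  have h1 : ∑ c ∈ W.filter (fun c => c.val < kk p),
      ((Finset.univ.filter fun i => c ∈ appr p s i).offDiag.image Sym2.mk.uncurry).card ≤
      (W.filter fun c => c.val < kk p).card * Nat.choose p 2 := by
    refine le_trans (Finset.sum_le_card_nsmul _ _ _ ?_) (le_of_eq (smul_eq_mul ..))
    intro c hc
    rw [Sym2.card_image_offDiag]
    exact Nat.choose_le_choose 2 (line_supp_card hp (Finset.mem_filter.mp hc).2)
  have h2 : ∑ c ∈ W.filter (fun c => ¬ c.val < kk p),
      ((Finset.univ.filter fun i => c ∈ appr p s i).offDiag.image Sym2.mk.uncurry).card ≤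
      (W.filter fun c => ¬ c.val < kk p).card * Nat.choose s 2 := by
    refine le_trans (Finset.sum_le_card_nsmul _ _ _ ?_) (le_of_eq (smul_eq_mul ..))
    intro c hc
    rw [Sym2.card_image_offDiag]
    exact Nat.choose_le_choose 2 (cover_supp_card hs (Finset.mem_filter.mp hc).2)
  exact add_le_add h1 h2

lemma grid_card (hp : p.Prime) (hs : 1 ≤ s) :
    ((Finset.univ : Finset (Fin (nn p s))).filter fun i => i.val < p * p).card = p * p := by
  have hlt : p * p < nn p s := by
    have hk : 0 < kk p := by have := hp.pos; simp only [kk]; positivity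
    have : 0 < kk p * s := Nat.mul_pos hk hs
    simp only [nn]; omega
  have : ((Finset.univ : Finset (Fin (nn p s))).filter fun i => i.val < p * p) =
      Finset.Iio ⟨p * p, hlt⟩ := by
    ext i
    simp [Finset.mem_Iio, Fin.lt_def]
  rw [this, Fin.card_Iio]

lemma lines_card (hp : p.Prime) :
    ((Finset.univ : Finset (Fin (mm p))).filter fun c => c.val < kk p).card = kk p := by
  have hlt : kk p < mm p := by
    have : 0 < kk p := by have := hp.pos; simp only [kk]; positivity
    simp only [mm]; omega
  have : ((Finset.univ : Finset (Fin (mm p))).filter fun c => c.val < kk p) =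
      Finset.Iio ⟨kk p, hlt⟩ := by
    ext c
    simp [Finset.mem_Iio, Fin.lt_def]
  rw [this, Fin.card_Iio]

lemma covers_card (hp : p.Prime) :
    ((Finset.univ : Finset (Fin (mm p))).filter fun c => ¬ c.val < kk p).card = kk p := by
  have h := Finset.card_filter_add_card_filter_not
    (s := (Finset.univ : Finset (Fin (mm p)))) (p := fun c => c.val < kk p)
  rw [Finset.card_univ, Fintype.card_fin, lines_card hp] at h
  simp only [mm] at h ⊢
  omega

lemma dvoters_card (hp : p.Prime) (hs : 1 ≤ s) :
    ((Finset.univ : Finset (Fin (nn p s))).filter fun i => ¬ i.val < p * p).card = kk p * s := by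
  have h := Finset.card_filter_add_card_filter_not
    (s := (Finset.univ : Finset (Fin (nn p s)))) (p := fun i => i.val < p * p)
  rw [Finset.card_univ, Fintype.card_fin, grid_card hp hs] at h
  simp only [nn] at h ⊢
  omega

lemma cc_upper (hs : 1 ≤ s) (W : Finset (Fin (mm p))) :
    ccScore (appr p s) W ≤ p * p + (W.filter fun c => ¬ c.val < kk p).card * s := by
  classical
  rw [ccScore]
  have hsub : (Finset.univ.filter fun v : Fin (nn p s) => (appr p s v ∩ W).Nonempty) ⊆
      (Finset.univ.filter fun i : Fin (nn p s) => i.val < p * p) ∪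
      (W.filter fun c => ¬ c.val < kk p).biUnion
        (fun c => Finset.univ.filter fun i => c ∈ appr p s i) := by
    intro v hv
    rw [Finset.mem_filter] at hv
    obtain ⟨c, hc⟩ := hv.2
    rw [Finset.mem_inter] at hc
    rw [Finset.mem_union]
    by_cases hg : v.val < p * p
    · exact Or.inl (Finset.mem_filter.mpr ⟨Finset.mem_univ _, hg⟩)
    · refine Or.inr (Finset.mem_biUnion.mpr ⟨c, Finset.mem_filter.mpr ⟨hc.2, ?_⟩,
        Finset.mem_filter.mpr ⟨Finset.mem_univ _, hc.1⟩⟩)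
      have := hc.1
      rw [mem_appr, approves, if_neg hg, decide_eq_true_eq] at this
      simp only [kk, this]
      exact Nat.not_lt.mpr (Nat.le_add_right _ _)
  refine le_trans (Finset.card_le_card hsub) (le_trans (Finset.card_union_le _ _) ?_)
  have h1 : ((Finset.univ : Finset (Fin (nn p s))).filter fun i => i.val < p * p).card ≤ p * p := by
    refine le_trans (Finset.card_le_card_of_injOn (fun i => i.val)
      (fun a ha => Finset.mem_range.mpr (Finset.mem_filter.mp ha).2) ?_)
      (le_of_eq (Finset.card_range _))
    intro i _ j _ h
    exact Fin.ext h
  have h2 : ((W.filter fun c => ¬ c.val < kk p).biUnion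
      (fun c => Finset.univ.filter fun i => c ∈ appr p s i)).card ≤
      (W.filter fun c => ¬ c.val < kk p).card * s := by
    refine le_trans Finset.card_biUnion_le ?_
    refine le_trans (Finset.sum_le_card_nsmul _ _ s ?_) (le_of_eq (smul_eq_mul ..))
    intro c hc
    exact cover_supp_card hs (Finset.mem_filter.mp hc).2
  exact add_le_add h1 h2

lemma pairs_lower (hp : p.Prime) (hs : 1 ≤ s) :
    Nat.choose (p * p) 2 ≤ maxScore (pairsScore (appr p s)) (kk p) := by
  classical
  set WP : Finset (Fin (mm p)) := Finset.univ.filter fun c => c.val < kk p with hWP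
  have hmem : WP ∈ (Finset.univ : Finset (Fin (mm p))).powersetCard (kk p) :=
    Finset.mem_powersetCard_univ.mpr (lines_card hp)
  refine le_trans ?_ (Finset.le_sup hmem)
  rw [pairsScore_eq_card]
  set G : Finset (Fin (nn p s)) := Finset.univ.filter fun i => i.val < p * p with hG
  have hsub : G.offDiag.image Sym2.mk.uncurry ⊆ (Finset.univ : Finset (Sym2 (Fin (nn p s)))).filter
      fun z => ¬ z.IsDiag ∧ ∃ u v, z = s(u, v) ∧ (appr p s u ∩ appr p s v ∩ WP).Nonempty := by
    intro z hz
    rw [Finset.mem_image] at hz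
    obtain ⟨⟨u, v⟩, huv, rfl⟩ := hz
    rw [Finset.mem_offDiag] at huv
    obtain ⟨hu, hv, hne⟩ := huv
    rw [hG, Finset.mem_filter] at hu hv
    have hvalne : u.val ≠ v.val := fun h => hne (Fin.ext h)
    obtain ⟨c0, hc0lt, hon1, hon2⟩ := exists_line p hp hu.2 hv.2 hvalne
    have hc0m : c0 < mm p := by simp only [mm, kk] at *; omega
    refine Finset.mem_filter.mpr ⟨Finset.mem_univ _,
      fun h => hne (Sym2.mk_isDiag_iff.mp h), u, v, rfl, ⟨c0, hc0m⟩, ?_⟩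
    simp only [Finset.mem_inter]
    refine ⟨⟨?_, ?_⟩, ?_⟩
    · rw [mem_appr, approves, if_pos hu.2, Bool.and_eq_true, decide_eq_true_eq]
      exact ⟨by simpa [kk] using hc0lt, hon1⟩
    · rw [mem_appr, approves, if_pos hv.2, Bool.and_eq_true, decide_eq_true_eq]
      exact ⟨by simpa [kk] using hc0lt, hon2⟩
    · rw [hWP, Finset.mem_filter]
      exact ⟨Finset.mem_univ _, by simpa [kk] using hc0lt⟩
  have := Finset.card_le_card hsub
  rw [Sym2.card_image_offDiag, grid_card hp hs] at this
  exact le_trans this (le_of_eq (by congr 1; ext; simp))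

lemma cc_lower (hp : p.Prime) (hs : 1 ≤ s) :
    kk p * s ≤ maxScore (ccScore (appr p s)) (kk p) := by
  classical
  set WD : Finset (Fin (mm p)) := Finset.univ.filter fun c => ¬ c.val < kk p with hWD
  have hmem : WD ∈ (Finset.univ : Finset (Fin (mm p))).powersetCard (kk p) :=
    Finset.mem_powersetCard_univ.mpr (covers_card hp)
  refine le_trans ?_ (Finset.le_sup hmem)
  rw [ccScore]
  have hsub : ((Finset.univ : Finset (Fin (nn p s))).filter fun i => ¬ i.val < p * p) ⊆
      Finset.univ.filter fun v => (appr p s v ∩ WD).Nonempty := by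
    intro i hi
    rw [Finset.mem_filter] at hi
    have hi2 := hi.2
    have hiub : i.val < p * p + kk p * s := by simpa [nn] using i.isLt
    have hdiv : (i.val - p * p) / s < kk p := by
      rw [Nat.div_lt_iff_lt_mul hs]
      omega
    have hcm : p * p + p + (i.val - p * p) / s < mm p := by
      have h2 := hdiv; simp only [kk] at h2; simp only [mm, kk]; omega
    refine Finset.mem_filter.mpr ⟨Finset.mem_univ _, ⟨⟨p * p + p + (i.val - p * p) / s, hcm⟩, ?_⟩⟩
    rw [Finset.mem_inter]
    constructor
    · rw [mem_appr, approves, if_neg hi2, decide_eq_true_eq]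
    · rw [hWD, Finset.mem_filter]
      exact ⟨Finset.mem_univ _, by simp only [kk]; exact Nat.not_lt.mpr (Nat.le_add_right _ _)⟩
  have := Finset.card_le_card hsub
  rwa [dvoters_card hp hs] at this

end PairsCC


lemma pairs_cc_arith (ε X S A B : ℝ) (hε : 0 < ε) (hX2 : 2 ≤ X) (hS1 : 1 ≤ S)
    (hεS : 2 ≤ ε * S) (hSX : S * S + 2 ≤ X) (hA0 : 0 ≤ A) (hB0 : 0 ≤ B)
    (habR : A + B = X * X + X) :
    (A * (X * (X - 1) / 2) + B * (S * (S - 1) / 2)) / ((X * X) * (X * X - 1) / 2) +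
      ((X * X) + B * S) / ((X * X + X) * S) ≤ 1 + ε := by
  have hX0 : (0:ℝ) < X := by linarith
  have hS0 : (0:ℝ) < S := by linarith
  have hKpos : (0:ℝ) < X * X + X := by nlinarith
  have hCp2pos : (0:ℝ) < X * (X - 1) / 2 := by nlinarith
  have e2 : (A * (X * (X - 1) / 2) + B * (S * (S - 1) / 2)) / ((X * X) * (X * X - 1) / 2) =
      A / (X * X + X) + (B / (X * X + X)) * ((S * (S - 1) / 2) / (X * (X - 1) / 2)) := by
    have e1 : (X * X) * (X * X - 1) / 2 = (X * X + X) * (X * (X - 1) / 2) := by ring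
    rw [e1, add_div, mul_div_mul_right _ _ (ne_of_gt hCp2pos), ← div_mul_div_comm]
  have e3 : ((X * X) + B * S) / ((X * X + X) * S) =
      (X * X) / ((X * X + X) * S) + B / (X * X + X) := by
    rw [add_div, mul_div_mul_right _ _ (ne_of_gt hS0)]
  have hr1 : (S * (S - 1) / 2) / (X * (X - 1) / 2) ≤ ε / 2 := by
    rw [div_le_iff₀ hCp2pos]
    have h1 : S * S ≤ X - 1 := by linarith
    have h2 : S * S ≤ X := by linarith
    have h3 : (S * S) * (S * S) ≤ X * (X - 1) := by
      apply mul_le_mul h2 h1 (by nlinarith) (by linarith)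
    have h5 : ε * ((S * S) * (S * S)) ≤ ε * (X * (X - 1)) :=
      mul_le_mul_of_nonneg_left h3 (le_of_lt hε)
    have h6 : 2 * (S * S) ≤ ε * ((S * S) * (S * S)) := by
      nlinarith [mul_le_mul_of_nonneg_right hεS (mul_nonneg (mul_nonneg hS0.le hS0.le) hS0.le),
        mul_le_mul_of_nonneg_left hS1 (mul_nonneg (mul_nonneg (by norm_num : (0:ℝ) ≤ 2) hS0.le) hS0.le)]
    nlinarith [h5, h6]
  have hr2 : (X * X) / ((X * X + X) * S) ≤ ε / 2 := by
    rw [div_le_iff₀ (by positivity)]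
    nlinarith [mul_le_mul_of_nonneg_right hεS (mul_nonneg hX0.le hX0.le),
      mul_nonneg (mul_nonneg hε.le hS0.le) hX0.le]
  have hnum0 : (0:ℝ) ≤ S * (S - 1) / 2 := by nlinarith
  have hratio0 : (0:ℝ) ≤ (S * (S - 1) / 2) / (X * (X - 1) / 2) :=
    div_nonneg hnum0 (le_of_lt hCp2pos)
  have hBle : B / (X * X + X) ≤ 1 := by
    rw [div_le_one hKpos]; linarith
  have hprod : (B / (X * X + X)) * ((S * (S - 1) / 2) / (X * (X - 1) / 2)) ≤ ε / 2 := by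
    calc (B / (X * X + X)) * ((S * (S - 1) / 2) / (X * (X - 1) / 2))
        ≤ 1 * (ε / 2) := mul_le_mul hBle hr1 hratio0 (by norm_num)
      _ = ε / 2 := by ring
  have hsum : A / (X * X + X) + B / (X * X + X) = 1 := by
    rw [← add_div, habR, div_self (ne_of_gt hKpos)]
  rw [e2, e3]
  linarith [hsum, hprod, hr2]

set_option maxHeartbeats 1000000 in
open PairsCC in
/-- **Tight trade-off between `Pairs` and `CC`.** For every `ε > 0` there exists an
election instance (with `n` voters, `m` candidates, committee size `0 < k ≤ m`, and
positive optimal `Pairs` and `CC` scores `P*` and `C*`) such that every feasible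
committee `W` (of size `k`) satisfies `Pairs(W)/P* + CC(W)/C* ≤ 1 + ε`. Consequently,
no voting rule can satisfy `α`-Pairs and `β`-CC with `α + β > 1`. -/
theorem pairs_cc_tradeoff_ub (ε : ℝ) (hε : 0 < ε) :
    ∃ (n m k : ℕ) (A : Fin n → Finset (Fin m)),
      0 < k ∧ k ≤ m ∧
      0 < maxScore (pairsScore A) k ∧ 0 < maxScore (ccScore A) k ∧
      ∀ W : Finset (Fin m), W.card = k →
        (pairsScore A W : ℝ) / (maxScore (pairsScore A) k : ℝ) +
          (ccScore A W : ℝ) / (maxScore (ccScore A) k : ℝ) ≤ 1 + ε := by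
  classical
  set s : ℕ := ⌈(2:ℝ)/ε⌉₊ with hs_def
  have hs1 : 1 ≤ s := Nat.ceil_pos.mpr (by positivity)
  have hsεn : (2:ℝ)/ε ≤ s := Nat.le_ceil _
  have hεS : (2:ℝ) ≤ ε * s := by
    rw [div_le_iff₀ hε] at hsεn
    linarith
  clear_value s
  obtain ⟨p, hsp, hp⟩ := Nat.exists_infinite_primes (s * s + 2)
  have hp2 : 2 ≤ p := hp.two_le
  have hkkpos : 0 < kk p := Nat.add_pos_right _ hp.pos
  have hPl := pairs_lower (s := s) hp hs1
  have hCl := cc_lower (s := s) hp hs1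
  have hppchoose : 0 < Nat.choose (p * p) 2 :=
    Nat.choose_pos (le_trans hp2 (Nat.le_mul_of_pos_left p hp.pos))
  have hPpos : 0 < maxScore (pairsScore (appr p s)) (kk p) := lt_of_lt_of_le hppchoose hPl
  have hCpos : 0 < maxScore (ccScore (appr p s)) (kk p) :=
    lt_of_lt_of_le (Nat.mul_pos hkkpos hs1) hCl
  refine ⟨nn p s, mm p, kk p, appr p s, hkkpos, by simp only [mm]; omega, hPpos, hCpos, ?_⟩
  intro W hW
  set a := (W.filter fun c => c.val < kk p).card with ha_def
  set b := (W.filter fun c => ¬ c.val < kk p).card with hb_def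
  have hab : a + b = kk p := by
    rw [ha_def, hb_def, Finset.card_filter_add_card_filter_not, hW]
  -- real abbreviations
  have hX2' : (2:ℝ) ≤ (p : ℝ) := by exact_mod_cast hp2
  have hS1' : (1:ℝ) ≤ (s : ℝ) := by exact_mod_cast hs1
  have hSX' : (s : ℝ) * (s : ℝ) + 2 ≤ (p : ℝ) := by
    have h := hsp
    have : ((s * s + 2 : ℕ) : ℝ) ≤ (p : ℝ) := by exact_mod_cast h
    push_cast at this
    linarith
  set X : ℝ := (p : ℝ) with hX_def
  set S : ℝ := (s : ℝ) with hS_def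
  have hX2 : (2:ℝ) ≤ X := hX2'
  have hS1 : (1:ℝ) ≤ S := hS1'
  have hSX : S * S + 2 ≤ X := hSX'

  have hX0 : (0:ℝ) < X := by linarith
  have hS0 : (0:ℝ) < S := by linarith
  clear_value X S
  have hKR : ((kk p : ℕ) : ℝ) = X * X + X := by
    rw [hX_def]; simp only [kk]; push_cast; ring
  have hKpos : (0:ℝ) < X * X + X := by nlinarith
  have hCp2R : ((Nat.choose p 2 : ℕ) : ℝ) = X * (X - 1) / 2 := by
    rw [hX_def, Nat.cast_choose_two]
  have hCs2R : ((Nat.choose s 2 : ℕ) : ℝ) = S * (S - 1) / 2 := by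
    rw [hS_def, Nat.cast_choose_two]
  have hCpp2R : ((Nat.choose (p * p) 2 : ℕ) : ℝ) = (X * X) * (X * X - 1) / 2 := by
    rw [hX_def, Nat.cast_choose_two]; push_cast; ring
  have hCp2pos : (0:ℝ) < X * (X - 1) / 2 := by nlinarith
  have hCpp2pos : (0:ℝ) < (X * X) * (X * X - 1) / 2 := by nlinarith
  have habR : (a : ℝ) + (b : ℝ) = X * X + X := by
    rw [← hKR]; exact_mod_cast congrArg (Nat.cast : ℕ → ℝ) hab
  have hA0 : (0:ℝ) ≤ (a : ℝ) := Nat.cast_nonneg a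
  have hB0 : (0:ℝ) ≤ (b : ℝ) := Nat.cast_nonneg b
  -- term 1 bound
  have t1 : (pairsScore (appr p s) W : ℝ) / (maxScore (pairsScore (appr p s)) (kk p) : ℝ) ≤
      ((a : ℝ) * (X * (X - 1) / 2) + (b : ℝ) * (S * (S - 1) / 2)) /
        ((X * X) * (X * X - 1) / 2) := by
    rw [← hCp2R, ← hCs2R, ← hCpp2R]
    apply div_le_div₀ (by positivity) ?_ (by exact_mod_cast hppchoose) (by exact_mod_cast hPl)
    have := pairs_upper (s := s) hp hs1 W
    rw [← ha_def, ← hb_def] at this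
    exact_mod_cast this
  -- term 2 bound
  have t2 : (ccScore (appr p s) W : ℝ) / (maxScore (ccScore (appr p s)) (kk p) : ℝ) ≤
      ((X * X) + (b : ℝ) * S) / ((X * X + X) * S) := by
    have hnum : (ccScore (appr p s) W : ℝ) ≤ (X * X) + (b : ℝ) * S := by
      rw [hX_def, hS_def]
      have := cc_upper (s := s) hs1 W
      rw [← hb_def] at this
      exact_mod_cast this
    have hden : (X * X + X) * S ≤ (maxScore (ccScore (appr p s)) (kk p) : ℝ) := by
      have : ((kk p * s : ℕ) : ℝ) ≤ (maxScore (ccScore (appr p s)) (kk p) : ℝ) := by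
        exact_mod_cast hCl
      rw [Nat.cast_mul, hKR] at this
      rw [hS_def]
      exact this
    exact div_le_div₀ (by positivity) hnum (by positivity) hden
  exact le_trans (add_le_add t1 t2)
    (pairs_cc_arith ε X S (a:ℝ) (b:ℝ) hε hX2 hS1 hεS hSX hA0 hB0 habR)
end
end

section
/- For every α ∈ (0,1) and every election instance ℰ = (V, A, k), there exists a committee W ⊆ C with |W| ≤ ⌊αk⌋ that satisfies α-EJR: for every ℓ ∈ [k] and every subset S ⊆ V such that α·|S| ≥ (ℓ/k)·|V| and |∩_{v ∈ S} A_v| ≥ ℓ, there exists a voter v ∈ S with |W ∩ A_v| ≥ ℓ. -/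
/-- A committee `W` satisfies `α`-EJR (approximate extended justified representation):
for every `ℓ ∈ [k]` and every group `S` of voters with `α·|S| ≥ (ℓ/k)·|V|` that commonly
approve at least `ℓ` candidates, some voter in `S` approves at least `ℓ` members of `W`. -/
def EJRsat {V C : Type*} [Fintype V] [Fintype C] [DecidableEq C]
    (A : V → Finset C) (k : ℕ) (α : ℝ) (W : Finset C) : Prop :=
  ∀ ℓ : ℕ, 1 ≤ ℓ → ℓ ≤ k → ∀ S : Finset V,
    (ℓ : ℝ) / (k : ℝ) * (Fintype.card V : ℝ) ≤ α * (S.card : ℝ) →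
    ℓ ≤ (Finset.univ.filter fun c : C => ∀ v ∈ S, c ∈ A v).card →
    ∃ v ∈ S, ℓ ≤ (W ∩ A v).card

/-- A violation of EJR at level `ℓ` for committee `W`. -/
def Viol {V C : Type*} [Fintype V] [Fintype C] [DecidableEq C]
    (A : V → Finset C) (k : ℕ) (α : ℝ) (W : Finset C) (ℓ : ℕ) : Prop :=
  1 ≤ ℓ ∧ ℓ ≤ k ∧ ∃ S : Finset V,
    (ℓ : ℝ) / (k : ℝ) * (Fintype.card V : ℝ) ≤ α * (S.card : ℝ) ∧
    ℓ ≤ (Finset.univ.filter fun c : C => ∀ v ∈ S, c ∈ A v).card ∧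
    ∀ v ∈ S, (W ∩ A v).card < ℓ

lemma greedy_key {V C : Type*} [Fintype V] [Fintype C] [DecidableEq C]
    (A : V → Finset C) (k : ℕ) (hk : 0 < k) (α : ℝ) (hα0 : 0 < α)
    (hn : 0 < Fintype.card V) :
    ∀ (fuel : ℕ) (W : Finset C) (U : Finset V) (L : ℕ),
      Fintype.card V ≤ U.card + fuel →
      (∀ v ∈ U, L ≤ (W ∩ A v).card) →
      (W.card : ℝ) ≤ α * k / (Fintype.card V : ℝ) * U.card →
      (∀ ℓ, L < ℓ → ¬ Viol A k α W ℓ) →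
      ∃ W' : Finset C, (W'.card : ℝ) ≤ α * k ∧ ∀ ℓ, ¬ Viol A k α W' ℓ := by
  classical
  have hn' : (0:ℝ) < (Fintype.card V : ℝ) := by exact_mod_cast hn
  have hk' : (0:ℝ) < (k : ℝ) := by exact_mod_cast hk
  intro fuel
  induction fuel using Nat.strong_induction_on with
  | _ fuel ih =>
  intro W U L hfuel hL hcard hmax
  by_cases hv : ∃ ℓ, Viol A k α W ℓ
  · obtain ⟨ℓ₀, hℓ₀⟩ := hv
    set F := (Finset.range (k+1)).filter (fun ℓ => Viol A k α W ℓ) with hF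
    have hFmem : ∀ ℓ', Viol A k α W ℓ' → ℓ' ∈ F := by
      intro ℓ' h
      simp only [hF, Finset.mem_filter, Finset.mem_range]
      exact ⟨Nat.lt_succ_of_le h.2.1, h⟩
    have hFne : F.Nonempty := ⟨ℓ₀, hFmem _ hℓ₀⟩
    set ℓ := F.max' hFne with hℓdef
    have hℓviol : Viol A k α W ℓ := (Finset.mem_filter.1 (F.max'_mem hFne)).2
    have hℓmax : ∀ ℓ', Viol A k α W ℓ' → ℓ' ≤ ℓ := fun ℓ' h => F.le_max' ℓ' (hFmem _ h)
    obtain ⟨hℓ1, hℓk, S, hSsize, hScomm, hSuns⟩ := hℓviol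
    have hℓL : ℓ ≤ L := by
      by_contra hc
      exact hmax ℓ (by omega) ⟨hℓ1, hℓk, S, hSsize, hScomm, hSuns⟩
    have hSne : S.Nonempty := by
      rw [Finset.nonempty_iff_ne_empty]
      intro h
      subst h
      simp only [Finset.card_empty, Nat.cast_zero, mul_zero] at hSsize
      have hpos : (0:ℝ) < (ℓ : ℝ) / (k : ℝ) * (Fintype.card V : ℝ) := by
        apply mul_pos (div_pos _ hk') hn'
        exact_mod_cast hℓ1
      linarith
    have hdisj : Disjoint U S := by
      rw [Finset.disjoint_right]
      intro v hvS hvU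
      have h1 := hSuns v hvS
      have h2 := hL v hvU
      omega
    have hUS : (U ∪ S).card = U.card + S.card := Finset.card_union_of_disjoint hdisj
    have hUSle : (U ∪ S).card ≤ Fintype.card V := Finset.card_le_univ _
    have hUlt : U.card < Fintype.card V := by
      have := hSne.card_pos
      omega
    obtain ⟨f, rfl⟩ : ∃ f, fuel = f + 1 := by
      cases fuel with
      | zero => omega
      | succ f => exact ⟨f, rfl⟩
    obtain ⟨T, hTsub, hTcard⟩ :=
      Finset.exists_subset_card_eq hScomm
    have hTA : ∀ v ∈ S, T ⊆ A v := by
      intro v hvS c hc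
      have := hTsub hc
      simp only [Finset.mem_filter] at this
      exact this.2 v hvS
    refine ih f (by omega) (W ∪ T) (U ∪ S) ℓ ?_ ?_ ?_ ?_
    · have := hSne.card_pos
      omega
    · intro v hvmem
      rcases Finset.mem_union.1 hvmem with hvU | hvS
      · calc ℓ ≤ L := hℓL
          _ ≤ (W ∩ A v).card := hL v hvU
          _ ≤ ((W ∪ T) ∩ A v).card := by
              apply Finset.card_le_card
              exact Finset.inter_subset_inter_right Finset.subset_union_left
      · have hsub : T ⊆ (W ∪ T) ∩ A v :=
          Finset.subset_inter Finset.subset_union_right (hTA v hvS)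
        calc ℓ = T.card := hTcard.symm
          _ ≤ ((W ∪ T) ∩ A v).card := Finset.card_le_card hsub
    · have h1 : (ℓ : ℝ) ≤ α * k / (Fintype.card V : ℝ) * S.card := by
        rw [div_mul_eq_mul_div, le_div_iff₀ hn']
        rw [div_mul_eq_mul_div, div_le_iff₀ hk'] at hSsize
        nlinarith
      have h2 : ((W ∪ T).card : ℝ) ≤ (W.card : ℝ) + (ℓ : ℝ) := by
        have := Finset.card_union_le W T
        rw [hTcard] at this
        exact_mod_cast this
      calc ((W ∪ T).card : ℝ) ≤ (W.card : ℝ) + (ℓ : ℝ) := h2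
        _ ≤ α * k / (Fintype.card V : ℝ) * U.card
            + α * k / (Fintype.card V : ℝ) * S.card := add_le_add hcard h1
        _ = α * k / (Fintype.card V : ℝ) * ((U ∪ S).card : ℝ) := by
            rw [hUS]; push_cast; ring
    · intro ℓ' hℓ' hviol'
      obtain ⟨h1, h2, S', hs1, hs2, hs3⟩ := hviol'
      have : Viol A k α W ℓ' := by
        refine ⟨h1, h2, S', hs1, hs2, fun v hv => ?_⟩
        have := hs3 v hv
        have hmono : (W ∩ A v).card ≤ ((W ∪ T) ∩ A v).card :=
          Finset.card_le_card (Finset.inter_subset_inter_right Finset.subset_union_left)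
        omega
      have := hℓmax ℓ' this
      omega
  · refine ⟨W, ?_, fun ℓ h => hv ⟨ℓ, h⟩⟩
    have h1 : (U.card : ℝ) ≤ (Fintype.card V : ℝ) := by
      exact_mod_cast Finset.card_le_univ U
    have h2 : 0 ≤ α * k / (Fintype.card V : ℝ) := by positivity
    calc (W.card : ℝ) ≤ α * k / (Fintype.card V : ℝ) * U.card := hcard
      _ ≤ α * k / (Fintype.card V : ℝ) * (Fintype.card V : ℝ) := by
          exact mul_le_mul_of_nonneg_left h1 h2
      _ = α * k := div_mul_cancel₀ _ (ne_of_gt hn')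

/-- **`α`-EJR with a `⌊αk⌋`-size committee (via `α`-MES).** For every `α ∈ (0,1)` and
every election instance, there exists a committee of size at most `⌊αk⌋` that satisfies
`α`-EJR. -/
theorem alpha_mes_ejr {V C : Type*} [Fintype V] [Nonempty V] [Fintype C] [DecidableEq C]
    (A : V → Finset C) (k : ℕ) (hk : 0 < k) (hkm : k ≤ Fintype.card C)
    (α : ℝ) (hα0 : 0 < α) (hα1 : α < 1) :
    ∃ W : Finset C, W.card ≤ ⌊α * (k : ℝ)⌋₊ ∧ EJRsat A k α W := by
  classical
  have hn : 0 < Fintype.card V := Fintype.card_pos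
  obtain ⟨W, hWcard, hWviol⟩ :=
    greedy_key A k hk α hα0 hn (Fintype.card V) ∅ ∅ k
      (by simp) (by simp) (by simp) (by
        intro ℓ hℓ hviol
        exact absurd hviol.2.1 (by omega))
  refine ⟨W, Nat.le_floor hWcard, ?_⟩
  intro ℓ h1 h2 S hsize hcomm
  by_contra hc
  push_neg at hc
  exact hWviol ℓ ⟨h1, h2, S, hsize, hcomm, hc⟩
end

section
/- For every α ∈ [0,1] and every election instance ℰ = (V, A, k), there exists a feasible committee W (|W| = k) that simultaneously satisfies α-Pairs (i.e., Pairs(W) ≥ α · max{Pairs(W') : |W'| = k}) and (1−α)-EJR. -/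
noncomputable section

section Helpers
open Finset


variable {V C : Type*} [Fintype V] [Fintype C] [DecidableEq C]

/-- Finset version of the covered-pairs set. -/
private def Pfin (A : V → Finset C) (W : Finset C) : Finset (Sym2 V) := by
  classical
  exact Finset.univ.filter
    (fun p => ¬ p.IsDiag ∧ ∃ u v : V, p = s(u, v) ∧ (A u ∩ A v ∩ W).Nonempty)

private lemma pairsScore_eq_card (A : V → Finset C) (W : Finset C) :
    pairsScore A W = (Pfin A W).card := by
  classical
  rw [pairsScore, Pfin]
  rw [← Set.ncard_coe_finset]
  congr 1
  ext p
  simp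

private lemma Pfin_mono (A : V → Finset C) {W W' : Finset C} (h : W ⊆ W') :
    Pfin A W ⊆ Pfin A W' := by
  classical
  intro p hp
  simp only [Pfin, Finset.mem_filter] at hp ⊢
  obtain ⟨hu, hd, u, v, rfl, c, hc⟩ := hp
  refine ⟨hu, hd, u, v, rfl, c, ?_⟩
  simp only [Finset.mem_inter] at hc ⊢
  exact ⟨⟨hc.1.1, hc.1.2⟩, h hc.2⟩

private lemma pairsScore_mono (A : V → Finset C) {W W' : Finset C} (h : W ⊆ W') :
    pairsScore A W ≤ pairsScore A W' := by
  rw [pairsScore_eq_card, pairsScore_eq_card]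
  exact Finset.card_le_card (Pfin_mono A h)

/-- Top-`t` selection: some `t`-subset captures a `t/|W|` fraction of any sum. -/
private lemma top_t {α : Type*} [DecidableEq α] (W : Finset α) (f : α → ℕ) (t : ℕ)
    (ht : t ≤ W.card) :
    ∃ T, T ⊆ W ∧ T.card = t ∧ t * (∑ c ∈ W, f c) ≤ W.card * (∑ c ∈ T, f c) := by
  classical
  induction W using Finset.strongInduction generalizing t with
  | _ W ih =>
    rcases eq_or_lt_of_le ht with heq | hlt
    · exact ⟨W, Finset.Subset.refl _, heq.symm, by rw [heq]⟩
    · have hne : W.Nonempty := Finset.card_pos.mp (Nat.lt_of_le_of_lt (Nat.zero_le t) hlt)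
      obtain ⟨c, hcW, hcmin⟩ := Finset.exists_min_image W f hne
      have hss : W.erase c ⊂ W := Finset.erase_ssubset hcW
      have hcard : t ≤ (W.erase c).card := by
        rw [Finset.card_erase_of_mem hcW]; omega
      obtain ⟨T, hTsub, hTcard, hTsum⟩ := ih (W.erase c) hss t hcard
      refine ⟨T, hTsub.trans (Finset.erase_subset _ _), hTcard, ?_⟩
      have h1 : ∑ x ∈ W, f x = f c + ∑ x ∈ W.erase c, f x :=
        (Finset.add_sum_erase W f hcW).symm
      have h2 : W.card = (W.erase c).card + 1 := by
        rw [Finset.card_erase_of_mem hcW]; omega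
      have h3 : t * f c ≤ ∑ x ∈ T, f x := by
        calc t * f c = ∑ _x ∈ T, f c := by rw [Finset.sum_const, hTcard, smul_eq_mul]
        _ ≤ ∑ x ∈ T, f x :=
          Finset.sum_le_sum fun x hx => hcmin x ((hTsub.trans (Finset.erase_subset _ _)) hx)
      calc t * ∑ x ∈ W, f x = t * f c + t * ∑ x ∈ W.erase c, f x := by rw [h1]; ring
        _ ≤ (∑ x ∈ T, f x) + (W.erase c).card * (∑ x ∈ T, f x) := add_le_add h3 hTsum
        _ = W.card * (∑ x ∈ T, f x) := by rw [h2]; ring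

end Helpers

section Part
variable {V C : Type*} [Fintype V] [Fintype C] [DecidableEq C]

private lemma exists_weight [Nonempty C] (A : V → Finset C) (W : Finset C) :
    ∃ f : C → ℕ, (∑ c ∈ W, f c = pairsScore A W) ∧
      ∀ T ⊆ W, ∑ c ∈ T, f c ≤ pairsScore A T := by
  classical
  set pred : Sym2 V → C → Prop :=
    fun p c => c ∈ W ∧ ∃ u v, p = s(u, v) ∧ c ∈ A u ∧ c ∈ A v with hpred
  set g : Sym2 V → C := fun p => if h : ∃ c, pred p c then h.choose else Classical.arbitrary C
    with hg
  have hgspec : ∀ p ∈ Pfin A W, pred p (g p) := by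
    intro p hp
    simp only [Pfin, Finset.mem_filter] at hp
    obtain ⟨-, -, u, v, rfl, c, hc⟩ := hp
    simp only [Finset.mem_inter] at hc
    have h : ∃ c, pred (s(u,v)) c := ⟨c, hc.2, u, v, rfl, hc.1.1, hc.1.2⟩
    simp only [hg, dif_pos h]
    exact h.choose_spec
  refine ⟨fun c => ((Pfin A W).filter (fun p => g p = c)).card, ?_, ?_⟩
  · rw [pairsScore_eq_card]
    exact (Finset.card_eq_sum_card_fiberwise (fun p hp => (hgspec p hp).1)).symm
  · intro T hT
    rw [pairsScore_eq_card]
    have hdisj : ∀ x ∈ T, ∀ y ∈ T, x ≠ y →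
        Disjoint ((Pfin A W).filter (fun p => g p = x))
          ((Pfin A W).filter (fun p => g p = y)) := by
      intro x _ y _ hxy
      apply Finset.disjoint_filter_filter'
      exact Set.disjoint_iff_forall_ne.mpr (by rintro p hp q hq rfl; exact hxy (hp ▸ hq ▸ rfl))
    calc ∑ c ∈ T, ((Pfin A W).filter (fun p => g p = c)).card
        = (T.biUnion fun c => (Pfin A W).filter (fun p => g p = c)).card :=
          (Finset.card_biUnion hdisj).symm
      _ ≤ (Pfin A T).card := by
          apply Finset.card_le_card
          intro p hp
          simp only [Finset.mem_biUnion, Finset.mem_filter] at hp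
          obtain ⟨c, hcT, hpW, hgc⟩ := hp
          have := hgspec p hpW
          rw [hgc] at this
          obtain ⟨-, u, v, hpuv, hu, hv⟩ := this
          simp only [Pfin, Finset.mem_filter, Finset.mem_univ, true_and]
          simp only [Pfin, Finset.mem_filter] at hpW
          exact ⟨hpW.2.1, u, v, hpuv, c, by simp [hu, hv, hcT]⟩
end Part

section Greedy
variable {V C : Type*} [Fintype V] [Nonempty V] [Fintype C] [DecidableEq C]

private lemma greedy (A : V → Finset C) (k : ℕ) (hk : 0 < k) (β : ℝ) (hβ : 0 ≤ β)
    (R : Finset V) : ∃ WE : Finset C,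
      ((WE.card : ℝ) * (Fintype.card V : ℝ) ≤ β * k * R.card) ∧
      ∀ ℓ : ℕ, 1 ≤ ℓ → ℓ ≤ k → ∀ S : Finset V, S ⊆ R →
        (ℓ : ℝ) / (k : ℝ) * (Fintype.card V : ℝ) ≤ β * S.card →
        ℓ ≤ (Finset.univ.filter fun c : C => ∀ v ∈ S, c ∈ A v).card →
        ∃ v ∈ S, ℓ ≤ (WE ∩ A v).card := by
  induction R using Finset.strongInduction with
  | _ R ih =>
    set n := Fintype.card V with hn
    have hn1 : 0 < n := Fintype.card_pos
    set P : ℕ → Prop := fun ℓ => 1 ≤ ℓ ∧ ∃ S : Finset V, S ⊆ R ∧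
      (ℓ : ℝ) / (k : ℝ) * (n : ℝ) ≤ β * S.card ∧
      ℓ ≤ (Finset.univ.filter fun c : C => ∀ v ∈ S, c ∈ A v).card with hP
    letI : DecidablePred P := Classical.decPred P
    letI := Classical.decEq V
    by_cases hex : ∃ ℓ ≤ k, P ℓ
    · obtain ⟨ℓ₀, hℓ₀k, hPℓ₀⟩ := hex
      set ℓs := Nat.findGreatest P k with hℓs
      have hPs : P ℓs := Nat.findGreatest_spec hℓ₀k hPℓ₀
      have hℓsk : ℓs ≤ k := Nat.findGreatest_le k
      obtain ⟨hℓs1, S, hSR, hSsize, hScoh⟩ := hPs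
      obtain ⟨T, hTsub, hTcard⟩ := Finset.exists_subset_card_eq hScoh
      have hkR : (0:ℝ) < (k:ℝ) := by exact_mod_cast hk
      have hlR : (0:ℝ) < (ℓs:ℝ) := by exact_mod_cast hℓs1
      have hnR : (0:ℝ) < (n:ℝ) := by exact_mod_cast hn1
      have hlpos : (0:ℝ) < (ℓs : ℝ) / (k : ℝ) * (n : ℝ) := mul_pos (div_pos hlR hkR) hnR
      have hSne : S.Nonempty := by
        rw [← Finset.card_pos]
        by_contra h
        push_neg at h
        interval_cases hc : S.card
        · simp [hc] at hSsize; linarith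
      have hss : R \ S ⊂ R := by
        obtain ⟨v, hv⟩ := hSne
        exact Finset.sdiff_ssubset hSR ⟨v, hv⟩
      obtain ⟨WE', hcard', hprop'⟩ := ih (R \ S) hss
      refine ⟨WE' ∪ T, ?_, ?_⟩
      · have hRS : ((R \ S).card : ℝ) = (R.card : ℝ) - S.card := by
          rw [Finset.card_sdiff_of_subset hSR]
          exact_mod_cast Nat.cast_sub (Finset.card_le_card hSR)
        have hls : (ℓs : ℝ) * n ≤ β * k * S.card := by
          have hk' : (0:ℝ) < k := by exact_mod_cast hk
          have := mul_le_mul_of_nonneg_right hSsize (le_of_lt hk')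
          calc (ℓs : ℝ) * n = (ℓs : ℝ) / k * n * k := by field_simp
            _ ≤ β * S.card * k := this
            _ = β * k * S.card := by ring
        calc ((WE' ∪ T).card : ℝ) * n ≤ ((WE'.card : ℝ) + T.card) * n := by
              have := Finset.card_union_le WE' T
              have : ((WE' ∪ T).card : ℝ) ≤ (WE'.card : ℝ) + T.card := by exact_mod_cast this
              exact mul_le_mul_of_nonneg_right this (by positivity)
          _ = (WE'.card : ℝ) * n + (ℓs : ℝ) * n := by rw [hTcard]; ring
          _ ≤ β * k * (R \ S).card + β * k * S.card := add_le_add hcard' hls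
          _ = β * k * R.card := by rw [hRS]; ring
      · intro ℓ h1ℓ hℓk S' hS'R hsize hcoh
        by_cases hint : (S' ∩ S).Nonempty
        · obtain ⟨v, hv⟩ := hint
          rw [Finset.mem_inter] at hv
          refine ⟨v, hv.1, ?_⟩
          have hℓℓs : ℓ ≤ ℓs := Nat.le_findGreatest hℓk ⟨h1ℓ, S', hS'R, hsize, hcoh⟩
          have hTA : T ⊆ (WE' ∪ T) ∩ A v := by
            intro c hc
            have hc' : ∀ w ∈ S, c ∈ A w := by
              have := hTsub hc
              simp only [Finset.mem_filter] at this
              exact this.2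
            exact Finset.mem_inter.mpr ⟨Finset.mem_union_right _ hc, hc' v hv.2⟩
          calc ℓ ≤ ℓs := hℓℓs
            _ = T.card := hTcard.symm
            _ ≤ ((WE' ∪ T) ∩ A v).card := Finset.card_le_card hTA
        · have hS'R' : S' ⊆ R \ S := by
            intro x hx
            rw [Finset.mem_sdiff]
            refine ⟨hS'R hx, fun hxS => hint ⟨x, Finset.mem_inter.mpr ⟨hx, hxS⟩⟩⟩
          obtain ⟨v, hvS', hvcard⟩ := hprop' ℓ h1ℓ hℓk S' hS'R' hsize hcoh
          refine ⟨v, hvS', hvcard.trans (Finset.card_le_card ?_)⟩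
          exact Finset.inter_subset_inter Finset.subset_union_left (Finset.Subset.refl _)
    · refine ⟨∅, by simpa using by positivity, ?_⟩
      intro ℓ h1ℓ hℓk S hSR hsize hcoh
      exact absurd ⟨ℓ, hℓk, h1ℓ, S, hSR, hsize, hcoh⟩ hex

end Greedy

/-- **Simultaneous approximation of `Pairs` and EJR.** For every `α ∈ [0,1]` and every
election instance, there exists a feasible committee (of size exactly `k`) that
simultaneously satisfies `α`-Pairs and `(1−α)`-EJR. -/
theorem pairs_ejr_simultaneous {V C : Type*} [Fintype V] [Nonempty V]
    [Fintype C] [DecidableEq C]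
    (A : V → Finset C) (k : ℕ) (hk : 0 < k) (hkm : k ≤ Fintype.card C)
    (α : ℝ) (hα0 : 0 ≤ α) (hα1 : α ≤ 1) :
    ∃ W : Finset C, W.card = k ∧
      α * (maxScore (pairsScore A) k : ℝ) ≤ (pairsScore A W : ℝ) ∧
      EJRsat A k (1 - α) W := by
  have hCne : Nonempty C := Fintype.card_pos_iff.mp (lt_of_lt_of_le hk hkm)
  have hnR : (0:ℝ) < (Fintype.card V : ℝ) := by exact_mod_cast Fintype.card_pos
  have hkR : (0:ℝ) < (k : ℝ) := by exact_mod_cast hk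
  obtain ⟨WE, hWEcard, hWEprop⟩ := greedy A k hk (1 - α) (by linarith) Finset.univ
  rw [Finset.card_univ] at hWEcard
  have hWEk : (WE.card : ℝ) ≤ (1 - α) * k :=
    le_of_mul_le_mul_right (by linarith [hWEcard]) hnR
  set t := ⌈α * k⌉₊ with htdef
  have htk : t ≤ k := Nat.ceil_le.mpr (by nlinarith)
  obtain ⟨Ws, hWsmem, hWssup⟩ := Finset.exists_mem_eq_sup _
    ((Finset.powersetCard_nonempty (n := k) (s := (Finset.univ : Finset C))).mpr (by rw [Finset.card_univ]; exact hkm)) (pairsScore A)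
  have hWscard : Ws.card = k := (Finset.mem_powersetCard.mp hWsmem).2
  have hmaxeq : maxScore (pairsScore A) k = pairsScore A Ws := hWssup
  obtain ⟨f, hfsum, hfle⟩ := exists_weight A Ws
  obtain ⟨T, hTWs, hTcard, hTsum⟩ := top_t Ws f t (by omega)
  have keyN : t * maxScore (pairsScore A) k ≤ k * pairsScore A T := by
    calc t * maxScore (pairsScore A) k = t * (∑ c ∈ Ws, f c) := by
          rw [hmaxeq, hfsum]
      _ ≤ Ws.card * (∑ c ∈ T, f c) := hTsum
      _ ≤ k * pairsScore A T := by
          rw [hWscard]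
          exact Nat.mul_le_mul_left k (hfle T hTWs)
  have hcardle : (WE ∪ T).card ≤ k := by
    have hceil : (t : ℝ) < α * k + 1 := Nat.ceil_lt_add_one (by positivity)
    have h1 : ((WE.card + t : ℕ) : ℝ) < (k : ℝ) + 1 := by push_cast; linarith
    have h2 : WE.card + t ≤ k := by
      have := (Nat.cast_lt (α := ℝ)).mp (by exact_mod_cast h1)
      omega
    calc (WE ∪ T).card ≤ WE.card + T.card := Finset.card_union_le _ _
      _ ≤ k := by omega
  obtain ⟨W, hWsub, hWcard⟩ := Finset.exists_superset_card_eq hcardle hkm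
  refine ⟨W, hWcard, ?_, ?_⟩
  · have hTW : T ⊆ W := Finset.subset_union_right.trans hWsub
    have hmono : (pairsScore A T : ℝ) ≤ pairsScore A W := by
      exact_mod_cast pairsScore_mono A hTW
    have hmax0 : (0:ℝ) ≤ (maxScore (pairsScore A) k : ℝ) := Nat.cast_nonneg _
    have hαt : α * (k:ℝ) ≤ (t : ℝ) := Nat.le_ceil _
    have keyR : (t : ℝ) * maxScore (pairsScore A) k ≤ (k : ℝ) * pairsScore A T := by
      exact_mod_cast keyN
    nlinarith [mul_le_mul_of_nonneg_right hαt hmax0,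
      mul_le_mul_of_nonneg_left hmono (le_of_lt hkR)]
  · intro ℓ h1 h2 S hsize hcoh
    obtain ⟨v, hvS, hv⟩ := hWEprop ℓ h1 h2 S (Finset.subset_univ S) hsize hcoh
    refine ⟨v, hvS, le_trans hv (Finset.card_le_card ?_)⟩
    exact Finset.inter_subset_inter (Finset.subset_union_left.trans hWsub)
      (Finset.Subset.refl _)
end
end

section
/- Let ℰ = (V, A, k) be an election instance in the voter interval (VI) domain with k even. Then there exists a committee W ⊆ C with |W| = k/2 such that Cons(W) ≥ (1/4) · max{Cons(W') : W' ⊆ C, |W'| = k}. -/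
noncomputable section

/-- The `Cons` score of a committee `W`: the number of unordered pairs of distinct
voters connected by `W`. -/
def consScore {V C : Type*} [DecidableEq C] (A : V → Finset C) (W : Finset C) : ℕ :=
  Set.ncard {p : Sym2 V | ¬ p.IsDiag ∧ ∃ u v : V, p = s(u, v) ∧ ConnectedBy A W u v}

/-- The election belongs to the voter interval (VI) domain: there is an ordering of the
voters such that every candidate's set of supporters is an interval of this ordering. -/
def IsVI {V C : Type*} [Fintype V] [DecidableEq V] [DecidableEq C]
    (A : V → Finset C) : Prop :=
  ∃ τ : Fin (Fintype.card V) ≃ V, ∀ c : C, ∃ i j : Fin (Fintype.card V),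
    (Finset.univ.filter fun v => c ∈ A v) = (Finset.Icc i j).image τ

/-! ### Auxiliary material -/

section ChainAux

set_option linter.unusedSectionVars false

variable {C : Type*} [DecidableEq C]

/-- Union of `K c` over a list of candidates. -/
def uK (K : C → Finset ℕ) : List C → Finset ℕ :=
  fun l => l.foldr (fun c s => K c ∪ s) ∅

@[simp] lemma uK_nil (K : C → Finset ℕ) : uK K [] = ∅ := rfl

@[simp] lemma uK_cons (K : C → Finset ℕ) (c : C) (l : List C) :
    uK K (c :: l) = K c ∪ uK K l := rfl

lemma mem_uK {K : C → Finset ℕ} {x : ℕ} {l : List C} :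
    x ∈ uK K l ↔ ∃ c ∈ l, x ∈ K c := by
  induction l with
  | nil => simp
  | cons c l ih => simp [ih]

lemma getD_mem {l : List C} {p : ℕ} (hp : p < l.length) (d : C) : l.getD p d ∈ l := by
  rw [List.getD_eq_getElem l d hp]; exact List.getElem_mem _

lemma chainLemma (K : C → Finset ℕ) (lo hi : C → ℕ) (d₀ : C) :
    ∀ N (F : Finset C), F.card ≤ N →
    (∀ c ∈ F, lo c ≤ hi c ∧ K c = Finset.Icc (lo c) (hi c)) →
    ∃ L : List C,
      (∀ c ∈ L, c ∈ F) ∧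
      List.Pairwise (fun c d => hi c < hi d) L ∧
      uK K L = F.biUnion K ∧
      (∀ p, p < L.length →
        uK K (L.take (p+1)) = (F.biUnion K) ∩ Finset.Iic (hi (L.getD p d₀))) ∧
      (∀ x ∈ F.biUnion K, L ≠ [] → lo (L.getD 0 d₀) ≤ x) ∧
      (∀ j, j < L.length →
        (∃ c ∈ F, lo c ≤ hi (L.getD j d₀) ∧ hi (L.getD j d₀) < hi c) →
        j + 1 < L.length ∧ lo (L.getD (j+1) d₀) ≤ hi (L.getD j d₀)) := by
  intro N
  induction N with
  | zero =>
    intro F hcard _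
    refine ⟨[], by simp, by simp, ?_, by simp, by simp, by simp⟩
    have : F = ∅ := Finset.card_eq_zero.mp (Nat.le_zero.mp hcard)
    simp [this]
  | succ N ih =>
    intro F hcard hF
    by_cases hU : (F.biUnion K).Nonempty
    · set U := F.biUnion K with hUdef
      have hm₀ : U.min' hU ∈ U := Finset.min'_mem _ _
      set m₀ := U.min' hU with hm₀def
      have hT : (F.filter (fun c => m₀ ∈ K c)).Nonempty := by
        rw [Finset.mem_biUnion] at hm₀
        obtain ⟨c, hc, hmc⟩ := hm₀
        exact ⟨c, Finset.mem_filter.mpr ⟨hc, hmc⟩⟩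
      obtain ⟨c₁, hc₁T, hc₁max⟩ := Finset.exists_max_image _ hi hT
      rw [Finset.mem_filter] at hc₁T
      obtain ⟨hc₁F, hc₁m⟩ := hc₁T
      obtain ⟨hlohi₁, hK₁⟩ := hF c₁ hc₁F
      have hlom : ∀ c ∈ F, m₀ ≤ lo c := by
        intro c hc
        have : lo c ∈ U := by
          rw [hUdef, Finset.mem_biUnion]
          exact ⟨c, hc, by rw [(hF c hc).2]; exact Finset.mem_Icc.mpr ⟨le_refl _, (hF c hc).1⟩⟩
        exact Finset.min'_le _ _ this
      have hlo₁ : lo c₁ = m₀ := by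
        have h1 : lo c₁ ≤ m₀ := by
          rw [hK₁] at hc₁m; exact (Finset.mem_Icc.mp hc₁m).1
        exact le_antisymm h1 (hlom c₁ hc₁F)
      have hKU : ∀ c ∈ F, K c ⊆ U := by
        intro c hc x hx
        rw [hUdef, Finset.mem_biUnion]; exact ⟨c, hc, hx⟩
      have hK₁' : K c₁ = Finset.Icc m₀ (hi c₁) := by rw [hK₁, hlo₁]
      have hsub : ∀ c ∈ F, hi c ≤ hi c₁ → K c ⊆ K c₁ := by
        intro c hc hhi
        rw [(hF c hc).2, hK₁']
        exact Finset.Icc_subset_Icc (hlom c hc) hhi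
      set F' := F.filter (fun c => hi c₁ < hi c) with hF'def
      have hF'F : ∀ c ∈ F', c ∈ F := fun c hc => (Finset.mem_filter.mp hc).1
      have hF'card : F'.card ≤ N := by
        have h1 : F' ⊆ F.erase c₁ := by
          intro c hc
          rw [Finset.mem_erase]
          refine ⟨?_, hF'F c hc⟩
          rintro rfl
          exact lt_irrefl _ (Finset.mem_filter.mp hc).2
        calc F'.card ≤ (F.erase c₁).card := Finset.card_le_card h1
          _ = F.card - 1 := Finset.card_erase_of_mem hc₁F
          _ ≤ N := by omega
      obtain ⟨L', h1', h2', h3', h4', h5', h6'⟩ :=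
        ih F' hF'card (fun c hc => hF c (hF'F c hc))
      have hUsplit : U = K c₁ ∪ F'.biUnion K := by
        apply Finset.Subset.antisymm
        · intro x hx
          rw [hUdef, Finset.mem_biUnion] at hx
          obtain ⟨c, hc, hxc⟩ := hx
          rcases le_or_gt (hi c) (hi c₁) with h | h
          · exact Finset.mem_union_left _ (hsub c hc h hxc)
          · exact Finset.mem_union_right _
              (Finset.mem_biUnion.mpr ⟨c, Finset.mem_filter.mpr ⟨hc, h⟩, hxc⟩)
        · intro x hx
          rcases Finset.mem_union.mp hx with h | h
          · exact hKU c₁ hc₁F h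
          · rw [Finset.mem_biUnion] at h
            obtain ⟨c, hc, hxc⟩ := h
            exact hKU c (hF'F c hc) hxc
      have hmemF' : ∀ d ∈ L', hi c₁ < hi d :=
        fun d hd => (Finset.mem_filter.mp (h1' d hd)).2
      refine ⟨c₁ :: L', ?_, ?_, ?_, ?_, ?_, ?_⟩
      · intro c hc
        rcases List.mem_cons.mp hc with rfl | hc
        · exact hc₁F
        · exact hF'F c (h1' c hc)
      · exact List.pairwise_cons.mpr ⟨hmemF', h2'⟩
      · rw [uK_cons, h3', ← hUsplit, hUdef]
      · intro p hp
        match p with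
        | 0 =>
          simp only [List.take, List.getD_cons_zero]
          have : K c₁ = U ∩ Finset.Iic (hi c₁) := by
            apply Finset.Subset.antisymm
            · intro x hx
              refine Finset.mem_inter.mpr ⟨hKU c₁ hc₁F hx, Finset.mem_Iic.mpr ?_⟩
              rw [hK₁'] at hx; exact (Finset.mem_Icc.mp hx).2
            · intro x hx
              rw [Finset.mem_inter, Finset.mem_Iic] at hx
              rw [hK₁', Finset.mem_Icc]
              exact ⟨Finset.min'_le _ _ hx.1, hx.2⟩
          simpa [uK] using this
        | q + 1 =>
          have hq : q < L'.length := by simpa using hp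
          have htake : (c₁ :: L').take (q+2) = c₁ :: L'.take (q+1) := rfl
          rw [htake, uK_cons, h4' q hq]
          have hgentry : L'.getD q d₀ ∈ L' := getD_mem hq d₀
          have hhi : hi c₁ < hi (L'.getD q d₀) := hmemF' _ hgentry
          have hgetD : (c₁ :: L').getD (q+1) d₀ = L'.getD q d₀ := rfl
          rw [hgetD, hUsplit]
          ext x
          simp only [Finset.mem_union, Finset.mem_inter, Finset.mem_Iic]
          constructor
          · rintro (hx | ⟨hx1, hx2⟩)
            · have : x ≤ hi c₁ := by
                rw [hK₁'] at hx; exact (Finset.mem_Icc.mp hx).2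
              exact ⟨Or.inl hx, this.trans hhi.le⟩
            · exact ⟨Or.inr hx1, hx2⟩
          · rintro ⟨hx1 | hx1, hx2⟩
            · exact Or.inl hx1
            · exact Or.inr ⟨hx1, hx2⟩
      · intro x hx _
        simp only [List.getD_cons_zero, hlo₁]
        exact Finset.min'_le _ _ hx
      · intro j hj hcross
        match j with
        | 0 =>
          simp only [List.getD_cons_zero] at hcross ⊢
          obtain ⟨c, hcF, hc1, hc2⟩ := hcross
          have hcF' : c ∈ F' := Finset.mem_filter.mpr ⟨hcF, hc2⟩
          have hloc : lo c ∈ F'.biUnion K := by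
            rw [Finset.mem_biUnion]
            exact ⟨c, hcF', by rw [(hF c hcF).2]; exact Finset.mem_Icc.mpr ⟨le_refl _, (hF c hcF).1⟩⟩
          have hL'ne : L' ≠ [] := by
            intro h
            rw [h] at h3'
            rw [← h3'] at hloc
            simp at hloc
          constructor
          · simp [List.length_pos_iff.mpr hL'ne]
          · have := h5' (lo c) hloc hL'ne
            calc lo ((c₁ :: L').getD 1 d₀) = lo (L'.getD 0 d₀) := rfl
              _ ≤ lo c := this
              _ ≤ hi c₁ := hc1
        | i + 1 =>
          have hi' : i < L'.length := by simpa using hj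
          have hgetD : (c₁ :: L').getD (i+1) d₀ = L'.getD i d₀ := rfl
          rw [hgetD] at hcross
          obtain ⟨c, hcF, hc1, hc2⟩ := hcross
          have hcF' : c ∈ F' := by
            refine Finset.mem_filter.mpr ⟨hcF, ?_⟩
            calc hi c₁ < hi (L'.getD i d₀) := hmemF' _ (getD_mem hi' d₀)
              _ < hi c := hc2
          obtain ⟨hlen, hlo⟩ := h6' i hi' ⟨c, hcF', hc1, hc2⟩
          exact ⟨by simpa using hlen, by simpa using hlo⟩
    · refine ⟨[], by simp, by simp, ?_, by simp, by simp, by simp⟩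
      rw [Finset.not_nonempty_iff_eq_empty] at hU
      simp [hU]

end ChainAux

section CharAux

variable {V C : Type*} [DecidableEq C] {A : V → Finset C} {pos : V → ℕ} {K : C → Finset ℕ}

lemma connectedBy_symm {W : Finset C} {u v : V} (h : ConnectedBy A W u v) :
    ConnectedBy A W v u := by
  refine (@Relation.ReflTransGen.symmetric _ (fun a b => (A a ∩ A b ∩ W).Nonempty) ⟨?_⟩).symm _ _ h
  intro a b hab
  rwa [Finset.inter_comm (A a)] at hab

lemma connectedBy_mono {W W' : Finset C} (hWW : W ⊆ W') {u v : V}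
    (h : ConnectedBy A W u v) : ConnectedBy A W' u v := by
  refine Relation.ReflTransGen.mono ?_ _ _ h
  intro a b hab
  obtain ⟨c, hc⟩ := hab
  simp only [Finset.mem_inter] at hc
  exact ⟨c, Finset.mem_inter.mpr ⟨Finset.mem_inter.mpr ⟨hc.1.1, hc.1.2⟩, hWW hc.2⟩⟩

variable (hKmem : ∀ c g, g ∈ K c ↔ ∃ v, c ∈ A v ∧ pos v = g)
  (hKconv : ∀ (c : C) (g₁ g₂ g : ℕ), g₁ ∈ K c → g₂ ∈ K c → g₁ ≤ g → g ≤ g₂ → g ∈ K c)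

include hKmem hKconv in
lemma conn_cross {W : Finset C} {u v : V} (h : ConnectedBy A W u v) :
    ∀ g, min (pos u) (pos v) ≤ g → g < max (pos u) (pos v) →
      ∃ c ∈ W, g ∈ K c ∧ g + 1 ∈ K c := by
  induction h with
  | refl => intro g h1 h2; omega
  | @tail b c' _ hbc ih =>
    intro g hg1 hg2
    obtain ⟨c, hc⟩ := hbc
    simp only [Finset.mem_inter] at hc
    have hb : pos b ∈ K c := (hKmem c (pos b)).mpr ⟨b, hc.1.1, rfl⟩
    have hc' : pos c' ∈ K c := (hKmem c (pos c')).mpr ⟨c', hc.1.2, rfl⟩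
    have hmin : min (pos b) (pos c') ∈ K c := by
      rcases le_total (pos b) (pos c') with h | h
      · rwa [min_eq_left h]
      · rwa [min_eq_right h]
    have hmax : max (pos b) (pos c') ∈ K c := by
      rcases le_total (pos b) (pos c') with h | h
      · rwa [max_eq_right h]
      · rwa [max_eq_left h]
    by_cases hcase : min (pos u) (pos b) ≤ g ∧ g < max (pos u) (pos b)
    · exact ih g hcase.1 hcase.2
    · have hbnd : min (pos b) (pos c') ≤ g ∧ g + 1 ≤ max (pos b) (pos c') := by omega
      exact ⟨c, hc.2, hKconv c _ _ g hmin hmax hbnd.1 (by omega),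
        hKconv c _ _ (g+1) hmin hmax (by omega) hbnd.2⟩

include hKmem in
lemma cross_conn (hposinj : Function.Injective pos) {W : Finset C} :
    ∀ (d : ℕ) (u v : V), pos u ≤ pos v → pos v = pos u + d →
    (∀ g, pos u ≤ g → g < pos v → ∃ c ∈ W, g ∈ K c ∧ g + 1 ∈ K c) →
    ConnectedBy A W u v := by
  intro d
  induction d with
  | zero =>
    intro u v _ heq _
    have : u = v := hposinj (by omega)
    rw [this]; exact Relation.ReflTransGen.refl
  | succ d ihd =>
    intro u v hord heq hcr
    obtain ⟨c, hcW, hg, hg1⟩ := hcr (pos u + d) (by omega) (by omega)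
    obtain ⟨w, hwA, hwpos⟩ := (hKmem c _).mp hg
    have hvA : c ∈ A v := by
      have : pos u + d + 1 = pos v := by omega
      rw [this] at hg1
      obtain ⟨v', hv'A, hv'pos⟩ := (hKmem c _).mp hg1
      rwa [hposinj hv'pos] at hv'A
    have h1 : ConnectedBy A W u w :=
      ihd u w (by omega) (by omega) (fun g hga hgb => hcr g hga (by omega))
    exact h1.tail ⟨c, Finset.mem_inter.mpr ⟨Finset.mem_inter.mpr ⟨hwA, hvA⟩, hcW⟩⟩

end CharAux

section CountAux

variable {V : Type*} [Fintype V] [DecidableEq V]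

lemma pairs_le (T : Set V) (P : Set (Sym2 V))
    (h : ∀ u v : V, u ∈ T → v ∈ T → u ≠ v → s(u, v) ∈ P) :
    T.ncard.choose 2 ≤ P.ncard := by
  classical
  haveI : Fintype T := T.toFinite.fintype
  have hmem : ∀ x : {a : Sym2 T // ¬ a.IsDiag}, Sym2.map Subtype.val x.1 ∈ P := by
    rintro ⟨q, hq⟩
    induction q with
    | _ a b =>
      have hab : a ≠ b := by simpa using hq
      have heq : (Sym2.map Subtype.val s(a, b)) = s((a : V), (b : V)) := by simp
      rw [heq]
      exact h a b a.2 b.2 (fun hh => hab (Subtype.ext hh))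
  have hfinj : Function.Injective
      (fun x : {a : Sym2 T // ¬ a.IsDiag} => (⟨Sym2.map Subtype.val x.1, hmem x⟩ : P)) := by
    intro x y hq
    exact Subtype.ext (Sym2.map.injective Subtype.val_injective (Subtype.ext_iff.mp hq))
  have h1 : Nat.card {a : Sym2 T // ¬ a.IsDiag} ≤ Nat.card P :=
    Nat.card_le_card_of_injective _ hfinj
  rw [Nat.card_eq_fintype_card, Sym2.card_subtype_not_diag] at h1
  rw [Nat.card_coe_set_eq] at h1
  have h2 : Fintype.card T = T.ncard := by
    rw [← Nat.card_coe_set_eq, Nat.card_eq_fintype_card]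
  rwa [h2] at h1

omit [DecidableEq V] in
lemma ncard_pairs_between (P : Set (Sym2 V)) (T1 T2 : Set V)
    (h : ∀ q ∈ P, ∃ u v : V, q = s(u, v) ∧ u ∈ T1 ∧ v ∈ T2) :
    P.ncard ≤ T1.ncard * T2.ncard := by
  classical
  have hsub : P ⊆ (fun x : V × V => s(x.1, x.2)) '' (T1 ×ˢ T2) := by
    intro q hq
    obtain ⟨u, v, rfl, h1, h2⟩ := h q hq
    exact ⟨(u, v), ⟨h1, h2⟩, rfl⟩
  calc P.ncard ≤ ((fun x : V × V => s(x.1, x.2)) '' (T1 ×ˢ T2)).ncard :=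
        Set.ncard_le_ncard hsub (Set.toFinite _)
    _ ≤ (T1 ×ˢ T2).ncard := Set.ncard_image_le (Set.toFinite _)
    _ = T1.ncard * T2.ncard := by
        rw [← Nat.card_coe_set_eq, ← Nat.card_coe_set_eq, ← Nat.card_coe_set_eq]
        rw [← Nat.card_prod]
        exact Nat.card_congr (Equiv.Set.prod T1 T2)

lemma two_ab_le_choose (a b : ℕ) : 2 * (a * b) ≤ (a + b + 1).choose 2 := by
  rw [Nat.choose_two_right, Nat.le_div_iff_mul_le (by norm_num)]
  have : a + b + 1 - 1 = a + b := by omega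
  rw [this]
  nlinarith [two_mul_le_add_sq a b]

end CountAux

section PSetAux

variable {V C : Type*} [DecidableEq C] (A : V → Finset C)

def connPairs (W : Finset C) : Set (Sym2 V) :=
  {p : Sym2 V | ¬ p.IsDiag ∧ ∃ u v : V, p = s(u, v) ∧ ConnectedBy A W u v}

lemma consScore_eq (W : Finset C) : consScore A W = (connPairs A W).ncard := rfl

lemma PSet_mono {W W' : Finset C} (h : W ⊆ W') : connPairs A W ⊆ connPairs A W' := by
  rintro q ⟨hd, u, v, rfl, hc⟩
  exact ⟨hd, u, v, rfl, connectedBy_mono h hc⟩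

lemma consScore_mono [Fintype V] {W W' : Finset C} (h : W ⊆ W') :
    consScore A W ≤ consScore A W' := by
  rw [consScore_eq, consScore_eq]
  exact Set.ncard_le_ncard (PSet_mono A h) (Set.toFinite _)

end PSetAux

/-- **Quarter of the optimal `Cons` score with half the committee on VI instances.**
For every election instance in the VI domain with even committee size `k`, there is a
committee of size `k/2` whose `Cons` score is at least one quarter of the optimal
`Cons` score over committees of size `k`. -/
theorem vi_half_committee_quarter_cons {V C : Type*} [Fintype V] [Fintype C]
    [DecidableEq V] [DecidableEq C]
    (A : V → Finset C) (k : ℕ) (hk : 0 < k) (hkm : k ≤ Fintype.card C)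
    (hkeven : Even k) (hVI : IsVI A) :
    ∃ W : Finset C, W.card = k / 2 ∧
      (1 / 4 : ℝ) * (maxScore (consScore A) k : ℝ) ≤ (consScore A W : ℝ) := by
  classical
  obtain ⟨τ, hτ⟩ := hVI
  have hk2 : k % 2 = 0 := Nat.even_iff.mp hkeven
  obtain ⟨d₀⟩ : Nonempty C := Fintype.card_pos_iff.mp (lt_of_lt_of_le hk hkm)
  set pos : V → ℕ := fun v => ((τ.symm v : Fin (Fintype.card V)) : ℕ) with hposdef
  have hposinj : Function.Injective pos := by
    intro a b hab
    exact τ.symm.injective (Fin.ext hab)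
  set K : C → Finset ℕ := fun c => (Finset.univ.filter fun v => c ∈ A v).image pos with hKdef
  have hKmem : ∀ c g, g ∈ K c ↔ ∃ v, c ∈ A v ∧ pos v = g := by
    intro c g
    simp [hKdef, Finset.mem_image, Finset.mem_filter]
  have hKicc : ∀ c : C, ∃ i j : Fin (Fintype.card V), K c = Finset.Icc (i : ℕ) (j : ℕ) := by
    intro c
    obtain ⟨i, j, hij⟩ := hτ c
    refine ⟨i, j, ?_⟩
    have h1 : K c = ((Finset.Icc i j).image τ).image pos := by rw [hKdef]; simp only; rw [hij]
    rw [h1, Finset.image_image]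
    have h2 : (pos ∘ τ) = fun x : Fin (Fintype.card V) => (x : ℕ) := by
      funext x; simp [hposdef]
    rw [h2]
    ext g
    simp only [Finset.mem_image, Finset.mem_Icc]
    constructor
    · rintro ⟨x, ⟨hx1, hx2⟩, rfl⟩
      exact ⟨hx1, hx2⟩
    · rintro ⟨h1', h2'⟩
      have hgn : g < Fintype.card V := lt_of_le_of_lt h2' j.isLt
      exact ⟨⟨g, hgn⟩, ⟨h1', h2'⟩, rfl⟩
  have hKconv : ∀ (c : C) (g₁ g₂ g : ℕ), g₁ ∈ K c → g₂ ∈ K c → g₁ ≤ g → g ≤ g₂ → g ∈ K c := by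
    intro c g₁ g₂ g h1 h2 h3 h4
    obtain ⟨i, j, hc⟩ := hKicc c
    rw [hc, Finset.mem_Icc] at h1 h2 ⊢
    omega
  -- the connectivity builder
  have mkconn : ∀ (W' : Finset C) (u v : V),
      (∀ g, min (pos u) (pos v) ≤ g → g < max (pos u) (pos v) →
        ∃ c ∈ W', g ∈ K c ∧ g + 1 ∈ K c) → ConnectedBy A W' u v := by
    intro W' u v hcr
    rcases le_total (pos u) (pos v) with h | h
    · exact cross_conn hKmem hposinj (pos v - pos u) u v h (by omega)
        (fun g h1 h2 => hcr g (by omega) (by omega))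
    · exact connectedBy_symm (cross_conn hKmem hposinj (pos u - pos v) v u h (by omega)
        (fun g h1 h2 => hcr g (by omega) (by omega)))
  -- optimal committee
  have hpow : ((Finset.univ : Finset C).powersetCard k).Nonempty :=
    Finset.powersetCard_nonempty.mpr (by simpa using hkm)
  obtain ⟨Wstar, hWs, hWeq⟩ := Finset.exists_mem_eq_sup _ hpow (consScore A)
  rw [Finset.mem_powersetCard] at hWs
  have hWcard : Wstar.card = k := hWs.2
  have hmaxeq : maxScore (consScore A) k = consScore A Wstar := hWeq
  have hhalf_le : k / 2 ≤ Fintype.card C := le_trans (Nat.div_le_self k 2) hkm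
  -- reduction to a natural-number statement
  suffices hmain : ∃ W0 : Finset C, W0.card ≤ k / 2 ∧ consScore A Wstar ≤ 4 * consScore A W0 by
    obtain ⟨W0, hcard, hle⟩ := hmain
    obtain ⟨W1, hsub, hcard1⟩ := Finset.exists_superset_card_eq hcard hhalf_le
    refine ⟨W1, hcard1, ?_⟩
    have h2 : consScore A W0 ≤ consScore A W1 := consScore_mono A hsub
    have h3 : maxScore (consScore A) k ≤ 4 * consScore A W1 := by
      rw [hmaxeq]; omega
    have h4 := (Nat.cast_le (α := ℝ)).mpr h3
    push_cast at h4
    linarith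
  -- interval data for candidates with nonempty supporter sets
  set F := Wstar.filter (fun c => (K c).Nonempty) with hFdef
  have hFint : ∀ c : C, ∃ a b : ℕ, c ∈ F → (a ≤ b ∧ K c = Finset.Icc a b) := by
    intro c
    by_cases hc : (K c).Nonempty
    · obtain ⟨i, j, hij⟩ := hKicc c
      have hle : (i : ℕ) ≤ (j : ℕ) := by
        obtain ⟨x, hx⟩ := hc
        rw [hij, Finset.mem_Icc] at hx
        omega
      exact ⟨i, j, fun _ => ⟨hle, hij⟩⟩
    · exact ⟨0, 0, fun hcF => absurd (Finset.mem_filter.mp hcF).2 hc⟩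
  choose lo hi hlohi using hFint
  obtain ⟨L, hL1, hL2, hL3, hL4, hL5, hL6⟩ :=
    chainLemma K lo hi d₀ F.card F le_rfl (fun c hc => hlohi c hc)
  set R := L.length with hRdef
  have hnodup : L.Nodup := hL2.imp (fun {a b} h => by rintro rfl; exact lt_irrefl _ h)
  have hFW : F ⊆ Wstar := Finset.filter_subset _ _
  have hRk : R ≤ k := by
    have h1 : L.toFinset ⊆ F := fun c hc => hL1 c (List.mem_toFinset.mp hc)
    calc R = L.toFinset.card := (List.toFinset_card_of_nodup hnodup).symm
      _ ≤ F.card := Finset.card_le_card h1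
      _ ≤ Wstar.card := Finset.card_le_card hFW
      _ = k := hWcard
  have hKU : ∀ c ∈ F, K c ⊆ F.biUnion K := fun c hc x hx => Finset.mem_biUnion.mpr ⟨c, hc, hx⟩
  have hKF : ∀ c ∈ Wstar, ∀ g : ℕ, g ∈ K c → c ∈ F :=
    fun c hc g hg => Finset.mem_filter.mpr ⟨hc, ⟨g, hg⟩⟩
  have hKint : ∀ c ∈ F, lo c ≤ hi c ∧ K c = Finset.Icc (lo c) (hi c) := hlohi
  -- endpoints of counted pairs are covered
  have hend : ∀ u v : V, u ≠ v → ConnectedBy A Wstar u v →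
      pos u ∈ F.biUnion K ∧ pos v ∈ F.biUnion K := by
    intro u v huv hconn
    have hpuv : pos u ≠ pos v := fun h => huv (hposinj h)
    have hcr := conn_cross hKmem hKconv hconn
    obtain ⟨c1, hc1W, hg1, _⟩ := hcr (min (pos u) (pos v)) (le_refl _) (by omega)
    obtain ⟨c2, hc2W, _, hg2⟩ := hcr (max (pos u) (pos v) - 1) (by omega) (by omega)
    have hminU : min (pos u) (pos v) ∈ F.biUnion K :=
      hKU c1 (hKF c1 hc1W _ hg1) hg1
    have hmaxU : max (pos u) (pos v) ∈ F.biUnion K := by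
      have : max (pos u) (pos v) - 1 + 1 = max (pos u) (pos v) := by omega
      rw [this] at hg2
      exact hKU c2 (hKF c2 hc2W _ hg2) hg2
    rcases le_total (pos u) (pos v) with h | h
    · rw [min_eq_left h] at hminU; rw [max_eq_right h] at hmaxU; exact ⟨hminU, hmaxU⟩
    · rw [min_eq_right h] at hminU; rw [max_eq_left h] at hmaxU; exact ⟨hmaxU, hminU⟩
  -- case split on the length of the chain
  rcases Nat.lt_or_ge R 2 with hSmall | hBig
  · -- R ≤ 1 : the whole chain works
    refine ⟨L.toFinset, ?_, ?_⟩
    · calc L.toFinset.card ≤ R := List.toFinset_card_le L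
        _ ≤ k / 2 := by omega
    · have hsub : connPairs A Wstar ⊆ connPairs A L.toFinset := by
        rintro q ⟨hd, u, v, rfl, hconn⟩
        refine ⟨hd, u, v, rfl, ?_⟩
        apply mkconn
        intro g hg1 hg2
        obtain ⟨c, hcW, hgc, hg1c⟩ := conn_cross hKmem hKconv hconn g hg1 hg2
        have hcF : c ∈ F := hKF c hcW _ hgc
        have hgU : g ∈ F.biUnion K := hKU c hcF hgc
        have hg1U : g + 1 ∈ F.biUnion K := hKU c hcF hg1c
        rw [← hL3] at hgU hg1U
        obtain ⟨d, hd, hgd⟩ := mem_uK.mp hgU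
        obtain ⟨d', hd', hg1d'⟩ := mem_uK.mp hg1U
        have hdd' : d = d' := by
          interval_cases R
          · exact absurd hd (by simp [List.length_eq_zero_iff.mp (by omega : L.length = 0)])
          · obtain ⟨x, hx⟩ := List.length_eq_one_iff.mp (by omega : L.length = 1)
            rw [hx] at hd hd'
            simp at hd hd'
            rw [hd, hd']
        refine ⟨d, List.mem_toFinset.mpr hd, hgd, by rw [hdd']; exact hg1d'⟩
      calc consScore A Wstar = (connPairs A Wstar).ncard := rfl
        _ ≤ (connPairs A L.toFinset).ncard := Set.ncard_le_ncard hsub (Set.toFinite _)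
        _ ≤ 4 * consScore A L.toFinset := by rw [consScore_eq]; omega
  · -- main case : R ≥ 2
    set p := R / 2 with hpdef
    have hp1 : 1 ≤ p := by omega
    have hpR : p < R := by omega
    set rp := hi (L.getD (p-1) d₀) with hrpdef
    set covP := uK K (L.take p) with hcovPdef
    set covS := uK K (L.drop p) with hcovSdef
    have hcovPeq : covP = F.biUnion K ∩ Finset.Iic rp := by
      have h := hL4 (p-1) (by omega)
      rw [show p - 1 + 1 = p by omega] at h
      exact h
    have hPSU : ∀ g : ℕ, g ∈ F.biUnion K ↔ g ∈ covP ∨ g ∈ covS := by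
      intro g
      rw [← hL3, hcovPdef, hcovSdef]
      constructor
      · intro hg
        obtain ⟨c, hc, hgc⟩ := mem_uK.mp hg
        rw [← List.take_append_drop p L, List.mem_append] at hc
        rcases hc with hc | hc
        · exact Or.inl (mem_uK.mpr ⟨c, hc, hgc⟩)
        · exact Or.inr (mem_uK.mpr ⟨c, hc, hgc⟩)
      · rintro (hg | hg) <;> obtain ⟨c, hc, hgc⟩ := mem_uK.mp hg
        · exact mem_uK.mpr ⟨c, List.mem_of_mem_take hc, hgc⟩
        · exact mem_uK.mpr ⟨c, List.mem_of_mem_drop hc, hgc⟩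
    have hmono : ∀ i j : ℕ, i < j → j < R → hi (L.getD i d₀) < hi (L.getD j d₀) := by
      intro i j hij hjR
      have h := List.pairwise_iff_getElem.mp hL2 i j (by omega) (by omega) hij
      rw [List.getD_eq_getElem L d₀ (show i < L.length by omega),
        List.getD_eq_getElem L d₀ (show j < L.length by omega)]
      exact h
    have htakeidx : ∀ d ∈ L.take p, ∃ j, j < p ∧ j < R ∧ L.getD j d₀ = d := by
      intro d hd
      obtain ⟨i, hi', hieq⟩ := List.mem_iff_getElem.mp hd
      rw [List.length_take] at hi'
      have h1 : i < p := lt_of_lt_of_le hi' (min_le_left _ _)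
      have h2 : i < R := lt_of_lt_of_le hi' (min_le_right _ _)
      refine ⟨i, h1, h2, ?_⟩
      rw [List.getD_eq_getElem L d₀ h2, ← hieq, List.getElem_take]
    have hdropidx : ∀ d ∈ L.drop p, ∃ j, p ≤ j ∧ j < R ∧ L.getD j d₀ = d := by
      intro d hd
      obtain ⟨i, hi', hieq⟩ := List.mem_iff_getElem.mp hd
      rw [List.length_drop] at hi'
      refine ⟨p + i, by omega, by omega, ?_⟩
      rw [List.getD_eq_getElem L d₀ (by omega), ← hieq, List.getElem_drop]
    have htakemem : ∀ j, j < p → L.getD j d₀ ∈ L.take p := by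
      intro j hj
      have hjR : j < R := by omega
      have h1 : j < (L.take p).length := by rw [List.length_take]; omega
      have h2 : (L.take p)[j] = L[j] := List.getElem_take
      rw [List.getD_eq_getElem L d₀ hjR, ← h2]
      exact List.getElem_mem h1
    have hdropmem : ∀ j, p ≤ j → j < R → L.getD j d₀ ∈ L.drop p := by
      intro j hj hjR
      have h1 : j - p < (L.drop p).length := by rw [List.length_drop]; omega
      have h2 : (L.drop p)[j - p] = L[p + (j - p)] := List.getElem_drop
      rw [List.getD_eq_getElem L d₀ (by omega : j < L.length)]
      have h3 : L[p + (j - p)] = L[j]'(by omega) := by congr 1; omega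
      rw [h3] at h2
      rw [← h2]
      exact List.getElem_mem h1
    have htakehi : ∀ d ∈ L.take p, hi d ≤ rp := by
      intro d hd
      obtain ⟨j, hjp, hjR, rfl⟩ := htakeidx d hd
      rcases Nat.lt_or_ge j (p-1) with h | h
      · exact (hmono j (p-1) h (by omega)).le
      · have : j = p - 1 := by omega
        rw [this]
    have hdrophi : ∀ d ∈ L.drop p, rp < hi d := by
      intro d hd
      obtain ⟨j, hjp, hjR, rfl⟩ := hdropidx d hd
      exact hmono (p-1) j (by omega) hjR
    have hcovPle : ∀ g ∈ covP, g ≤ rp := by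
      intro g hg
      rw [hcovPeq, Finset.mem_inter, Finset.mem_Iic] at hg
      exact hg.2
    have hcovSU : ∀ g ∈ covS, g ∈ F.biUnion K := fun g hg => (hPSU g).mpr (Or.inr hg)
    have hcovPU : ∀ g ∈ covP, g ∈ F.biUnion K := fun g hg => (hPSU g).mpr (Or.inl hg)
    have hcovSgt : ∀ g, g ∈ F.biUnion K → rp < g → g ∈ covS := by
      intro g hg hrg
      rcases (hPSU g).mp hg with h | h
      · exact absurd (hcovPle g h) (by omega)
      · exact h
    -- prefix adjacency closure
    have hAdjP : ∀ g, g ∈ covP → g + 1 ∈ covP → (∃ c ∈ F, g ∈ K c ∧ g + 1 ∈ K c) →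
        ∃ d ∈ L.take p, g ∈ K d ∧ g + 1 ∈ K d := by
      rintro g hg hg1 ⟨c, hcF, hgc, hg1c⟩
      obtain ⟨d', hd', hgd'⟩ := mem_uK.mp hg
      have hd'F : d' ∈ F := hL1 d' (List.mem_of_mem_take hd')
      obtain ⟨hld', hKd'⟩ := hKint d' hd'F
      rw [hKd', Finset.mem_Icc] at hgd'
      by_cases hcase : g + 1 ≤ hi d'
      · exact ⟨d', hd', by rw [hKd', Finset.mem_Icc]; omega,
          by rw [hKd', Finset.mem_Icc]; omega⟩
      · have hhid' : hi d' = g := by omega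
        obtain ⟨j, hjp, hjR, hjd⟩ := htakeidx d' hd'
        have hloc : lo c ≤ g ∧ g + 1 ≤ hi c := by
          have h := (hKint c hcF).2
          rw [h, Finset.mem_Icc] at hgc hg1c
          omega
        obtain ⟨hlt, hlo6⟩ := hL6 j hjR
          ⟨c, hcF, by rw [hjd, hhid']; exact hloc.1, by rw [hjd, hhid']; omega⟩
        have hdF : L.getD (j+1) d₀ ∈ F := hL1 _ (getD_mem hlt d₀)
        have hhd : g < hi (L.getD (j+1) d₀) := by
          have := hmono j (j+1) (by omega) hlt
          rw [hjd, hhid'] at this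
          exact this
        have hj1p : j + 1 < p := by
          by_contra hcon
          have : j = p - 1 := by omega
          rw [this] at hjd
          have : rp = g := by rw [hrpdef, hjd, hhid']
          have := hcovPle (g+1) hg1
          omega
        refine ⟨L.getD (j+1) d₀, htakemem (j+1) hj1p, ?_, ?_⟩ <;>
          rw [(hKint _ hdF).2, Finset.mem_Icc]
        · constructor
          · calc lo (L.getD (j+1) d₀) ≤ hi (L.getD j d₀) := hlo6
              _ = g := by rw [hjd, hhid']
          · omega
        · constructor
          · calc lo (L.getD (j+1) d₀) ≤ hi (L.getD j d₀) := hlo6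
              _ = g := by rw [hjd, hhid']
              _ ≤ g + 1 := by omega
          · omega
    -- suffix adjacency closure
    have hAdjS : ∀ g, g ∈ covS → g + 1 ∈ covS → (∃ c ∈ F, g ∈ K c ∧ g + 1 ∈ K c) →
        ∃ d ∈ L.drop p, g ∈ K d ∧ g + 1 ∈ K d := by
      rintro g hg hg1 ⟨c, hcF, hgc, hg1c⟩
      obtain ⟨d', hd', hg1d'⟩ := mem_uK.mp hg1
      have hd'F : d' ∈ F := hL1 d' (List.mem_of_mem_drop hd')
      rw [(hKint d' hd'F).2, Finset.mem_Icc] at hg1d'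
      by_cases hcase : lo d' ≤ g
      · exact ⟨d', hd', by rw [(hKint d' hd'F).2, Finset.mem_Icc]; omega,
          by rw [(hKint d' hd'F).2, Finset.mem_Icc]; omega⟩
      · obtain ⟨d'', hd'', hgd''⟩ := mem_uK.mp hg
        have hd''F : d'' ∈ F := hL1 d'' (List.mem_of_mem_drop hd'')
        rw [(hKint d'' hd''F).2, Finset.mem_Icc] at hgd''
        by_cases hcase2 : g + 1 ≤ hi d''
        · exact ⟨d'', hd'', by rw [(hKint d'' hd''F).2, Finset.mem_Icc]; omega,
            by rw [(hKint d'' hd''F).2, Finset.mem_Icc]; omega⟩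
        · have hhid'' : hi d'' = g := by omega
          obtain ⟨j, hjp, hjR, hjd⟩ := hdropidx d'' hd''
          have hloc : lo c ≤ g ∧ g + 1 ≤ hi c := by
            have h := (hKint c hcF).2
            rw [h, Finset.mem_Icc] at hgc hg1c
            omega
          obtain ⟨hlt, hlo6⟩ := hL6 j hjR
            ⟨c, hcF, by rw [hjd, hhid'']; exact hloc.1, by rw [hjd, hhid'']; omega⟩
          have hdF : L.getD (j+1) d₀ ∈ F := hL1 _ (getD_mem hlt d₀)
          have hhd : g < hi (L.getD (j+1) d₀) := by
            have := hmono j (j+1) (by omega) hlt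
            rw [hjd, hhid''] at this
            exact this
          refine ⟨L.getD (j+1) d₀, hdropmem (j+1) (by omega) hlt, ?_, ?_⟩ <;>
            rw [(hKint _ hdF).2, Finset.mem_Icc]
          · constructor
            · calc lo (L.getD (j+1) d₀) ≤ hi (L.getD j d₀) := hlo6
                _ = g := by rw [hjd, hhid'']
            · omega
          · constructor
            · calc lo (L.getD (j+1) d₀) ≤ hi (L.getD j d₀) := hlo6
                _ = g := by rw [hjd, hhid'']
                _ ≤ g + 1 := by omega
            · omega
    set X0 := (L.take p).toFinset with hX0def
    set Y0 := (L.drop p).toFinset with hY0def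
    have hX0card : X0.card ≤ k / 2 := by
      calc X0.card ≤ (L.take p).length := List.toFinset_card_le _
        _ = min p R := List.length_take
        _ ≤ k / 2 := by omega
    have hY0card : Y0.card ≤ k / 2 := by
      calc Y0.card ≤ (L.drop p).length := List.toFinset_card_le _
        _ = R - p := List.length_drop
        _ ≤ k / 2 := by omega
    -- transfer lemmas
    have hT1 : ∀ u v : V, pos u ∈ covP → pos v ∈ covP → ConnectedBy A Wstar u v →
        ConnectedBy A X0 u v := by
      intro u v hu hv hconn
      apply mkconn
      intro g hg1 hg2
      obtain ⟨c, hcW, hgc, hg1c⟩ := conn_cross hKmem hKconv hconn g hg1 hg2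
      have hcF : c ∈ F := hKF c hcW _ hgc
      have hgU : g ∈ F.biUnion K := hKU c hcF hgc
      have hg1U : g + 1 ∈ F.biUnion K := hKU c hcF hg1c
      have hup : pos u ≤ rp := hcovPle _ hu
      have hvp : pos v ≤ rp := hcovPle _ hv
      have hgP : g ∈ covP := by
        rw [hcovPeq, Finset.mem_inter, Finset.mem_Iic]
        exact ⟨hgU, by omega⟩
      have hg1P : g + 1 ∈ covP := by
        rw [hcovPeq, Finset.mem_inter, Finset.mem_Iic]
        exact ⟨hg1U, by omega⟩
      obtain ⟨d, hd, h1, h2⟩ := hAdjP g hgP hg1P ⟨c, hcF, hgc, hg1c⟩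
      exact ⟨d, List.mem_toFinset.mpr hd, h1, h2⟩
    have hT2 : ∀ u v : V, pos u ∈ covS → pos v ∈ covS → ConnectedBy A Wstar u v →
        ConnectedBy A Y0 u v := by
      intro u v hu hv hconn
      have hanchor : ∃ w : V, pos w ∈ covS ∧ pos w = min (pos u) (pos v) := by
        rcases le_total (pos u) (pos v) with h | h
        · exact ⟨u, hu, (min_eq_left h).symm⟩
        · exact ⟨v, hv, (min_eq_right h).symm⟩
      obtain ⟨w, hwS, hwmin⟩ := hanchor
      apply mkconn
      intro g hg1 hg2
      obtain ⟨c, hcW, hgc, hg1c⟩ := conn_cross hKmem hKconv hconn g hg1 hg2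
      have hcF : c ∈ F := hKF c hcW _ hgc
      have hgU : g ∈ F.biUnion K := hKU c hcF hgc
      have hg1U : g + 1 ∈ F.biUnion K := hKU c hcF hg1c
      rcases le_or_gt g rp with hle | hgt
      · obtain ⟨d, hd, hpwd⟩ := mem_uK.mp hwS
        have hdF : d ∈ F := hL1 d (List.mem_of_mem_drop hd)
        have hhid : rp < hi d := hdrophi d hd
        rw [(hKint d hdF).2, Finset.mem_Icc] at hpwd
        refine ⟨d, List.mem_toFinset.mpr hd, ?_, ?_⟩ <;>
          rw [(hKint d hdF).2, Finset.mem_Icc] <;> omega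
      · have hgS : g ∈ covS := hcovSgt g hgU hgt
        have hg1S : g + 1 ∈ covS := hcovSgt _ hg1U (by omega)
        obtain ⟨d, hd, h1, h2⟩ := hAdjS g hgS hg1S ⟨c, hcF, hgc, hg1c⟩
        exact ⟨d, List.mem_toFinset.mpr hd, h1, h2⟩
    -- pair sets
    set PP := {q : Sym2 V | ¬ q.IsDiag ∧ ∃ u v : V, q = s(u, v) ∧ ConnectedBy A Wstar u v ∧
      pos u ∈ covP ∧ pos v ∈ covP} with hPPdef
    set PS := {q : Sym2 V | ¬ q.IsDiag ∧ ∃ u v : V, q = s(u, v) ∧ ConnectedBy A Wstar u v ∧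
      pos u ∈ covS ∧ pos v ∈ covS} with hPSdef
    set PB := {q : Sym2 V | ¬ q.IsDiag ∧ ∃ u v : V, q = s(u, v) ∧ ConnectedBy A Wstar u v ∧
      (pos u ∈ covP ∧ pos u ∉ covS) ∧ (pos v ∈ covS ∧ pos v ∉ covP)} with hPBdef
    have hsplit : connPairs A Wstar ⊆ PP ∪ PS ∪ PB := by
      rintro q ⟨hd, u, v, rfl, hconn⟩
      have huv : u ≠ v := fun h => hd (by rw [h]; exact Sym2.mk_isDiag_iff.mpr rfl)
      obtain ⟨huU, hvU⟩ := hend u v huv hconn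
      by_cases hup : pos u ∈ covP <;> by_cases hvp : pos v ∈ covP
      · exact Or.inl (Or.inl ⟨hd, u, v, rfl, hconn, hup, hvp⟩)
      · -- v ∈ covS
        have hvs : pos v ∈ covS := by
          rcases (hPSU (pos v)).mp hvU with h | h
          · exact absurd h hvp
          · exact h
        by_cases hus : pos u ∈ covS
        · exact Or.inl (Or.inr ⟨hd, u, v, rfl, hconn, hus, hvs⟩)
        · exact Or.inr ⟨hd, u, v, rfl, hconn, ⟨hup, hus⟩, ⟨hvs, hvp⟩⟩
      · have hus : pos u ∈ covS := by
          rcases (hPSU (pos u)).mp huU with h | h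
          · exact absurd h hup
          · exact h
        by_cases hvs : pos v ∈ covS
        · exact Or.inl (Or.inr ⟨hd, u, v, rfl, hconn, hus, hvs⟩)
        · exact Or.inr ⟨hd, v, u, Sym2.eq_swap, connectedBy_symm hconn, ⟨hvp, hvs⟩, ⟨hus, hup⟩⟩
      · have hus : pos u ∈ covS := by
          rcases (hPSU (pos u)).mp huU with h | h
          · exact absurd h hup
          · exact h
        have hvs : pos v ∈ covS := by
          rcases (hPSU (pos v)).mp hvU with h | h
          · exact absurd h hvp
          · exact h
        exact Or.inl (Or.inr ⟨hd, u, v, rfl, hconn, hus, hvs⟩)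
    have hPPsub : PP ⊆ connPairs A X0 := by
      rintro q ⟨hd, u, v, rfl, hconn, hu, hv⟩
      exact ⟨hd, u, v, rfl, hT1 u v hu hv hconn⟩
    have hPSsub : PS ⊆ connPairs A Y0 := by
      rintro q ⟨hd, u, v, rfl, hconn, hu, hv⟩
      exact ⟨hd, u, v, rfl, hT2 u v hu hv hconn⟩
    have hineq1 : (connPairs A Wstar).ncard ≤ PP.ncard + PS.ncard + PB.ncard := by
      calc (connPairs A Wstar).ncard ≤ (PP ∪ PS ∪ PB).ncard :=
            Set.ncard_le_ncard hsplit (Set.toFinite _)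
        _ ≤ (PP ∪ PS).ncard + PB.ncard := Set.ncard_union_le _ _
        _ ≤ PP.ncard + PS.ncard + PB.ncard := by
            have := Set.ncard_union_le PP PS
            omega
    have hPPX : PP.ncard ≤ consScore A X0 := by
      rw [consScore_eq]
      exact Set.ncard_le_ncard hPPsub (Set.toFinite _)
    have hPSY : PS.ncard ≤ consScore A Y0 := by
      rw [consScore_eq]
      exact Set.ncard_le_ncard hPSsub (Set.toFinite _)
    -- bound the bad pairs
    have hPBbound : 2 * PB.ncard ≤ (connPairs A Wstar).ncard := by
      rcases Set.eq_empty_or_nonempty PB with hPBe | hPBne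
      · simp [hPBe]
      · obtain ⟨q0, hq0⟩ := hPBne
        obtain ⟨hd0, u0, v0, hq0eq, hconn0, ⟨hu0P, hu0S⟩, hv0S, hv0P⟩ := hq0
        have hpu0 : pos u0 ≤ rp := hcovPle _ hu0P
        have hpv0 : rp < pos v0 := by
          by_contra hcon
          exact hv0P (by
            rw [hcovPeq, Finset.mem_inter, Finset.mem_Iic]
            exact ⟨hcovSU _ hv0S, by omega⟩)
        obtain ⟨c, hcW, hgc, hg1c⟩ := conn_cross hKmem hKconv hconn0 rp (by omega) (by omega)
        have hcF : c ∈ F := hKF c hcW _ hgc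
        have hloc : lo c ≤ rp ∧ rp + 1 ≤ hi c := by
          have h := (hKint c hcF).2
          rw [h, Finset.mem_Icc] at hgc hg1c
          omega
        have hcross6 : ∃ c' ∈ F, lo c' ≤ hi (L.getD (p-1) d₀) ∧
            hi (L.getD (p-1) d₀) < hi c' :=
          ⟨c, hcF, by rw [← hrpdef]; exact hloc.1, by rw [← hrpdef]; omega⟩
        obtain ⟨hplt, hov⟩ := hL6 (p-1) (by omega) hcross6
        rw [show p - 1 + 1 = p by omega] at hplt hov
        rw [← hrpdef] at hov
        -- the overlap candidate and voters
        have hcpF : L.getD p d₀ ∈ F := hL1 _ (getD_mem hplt d₀)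
        have hcpdrop : L.getD p d₀ ∈ L.drop p := hdropmem p (le_refl p) hplt
        have hcphi : rp < hi (L.getD p d₀) := hdrophi _ hcpdrop
        have hrpK : rp ∈ K (L.getD (p-1) d₀) := by
          have hF' : L.getD (p-1) d₀ ∈ F := hL1 _ (getD_mem (by omega : p - 1 < R) d₀)
          rw [(hKint _ hF').2, Finset.mem_Icc]
          exact ⟨(hKint _ hF').1, le_refl _⟩
        obtain ⟨w1, hw1A, hw1pos⟩ := (hKmem _ _).mp hrpK
        set Kc : Set V := {v : V | ConnectedBy A Wstar v w1} with hKcdef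
        have hlocp : lo (L.getD p d₀) ∈ K (L.getD p d₀) := by
          rw [(hKint _ hcpF).2, Finset.mem_Icc]
          exact ⟨le_refl _, (hKint _ hcpF).1⟩
        obtain ⟨w0, hw0A, hw0pos⟩ := (hKmem _ _).mp hlocp
        have hrpKcp : rp ∈ K (L.getD p d₀) := by
          rw [(hKint _ hcpF).2, Finset.mem_Icc]
          exact ⟨hov, by omega⟩
        have hcpW : L.getD p d₀ ∈ Wstar := hFW hcpF
        have hw1cp : L.getD p d₀ ∈ A w1 := by
          obtain ⟨v', hv'A, hv'pos⟩ := (hKmem _ _).mp hrpKcp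
          have : v' = w1 := hposinj (by rw [hv'pos, hw1pos])
          rwa [this] at hv'A
        have hw0conn : ConnectedBy A Wstar w0 w1 :=
          Relation.ReflTransGen.single
            ⟨L.getD p d₀, Finset.mem_inter.mpr ⟨Finset.mem_inter.mpr ⟨hw0A, hw1cp⟩, hcpW⟩⟩
        have hw0P : pos w0 ∈ covP := by
          rw [hcovPeq, Finset.mem_inter, Finset.mem_Iic, hw0pos]
          exact ⟨hKU _ hcpF hlocp, hov⟩
        have hw0S : pos w0 ∈ covS := by
          rw [hw0pos, hcovSdef]
          exact mem_uK.mpr ⟨L.getD p d₀, hcpdrop, hlocp⟩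
        -- bad endpoints lie in the component of w1
        have hbadmem : ∀ u v : V, ConnectedBy A Wstar u v → pos u ∈ covP → pos u ∉ covS →
            pos v ∈ covS → pos v ∉ covP → (u ∈ Kc ∧ v ∈ Kc) := by
          intro u v hconn huP huS hvS hvP
          have hpu : pos u ≤ rp := hcovPle _ huP
          have hpv : rp < pos v := by
            by_contra hcon
            exact hvP (by
              rw [hcovPeq, Finset.mem_inter, Finset.mem_Iic]
              exact ⟨hcovSU _ hvS, by omega⟩)
          have h1 : ConnectedBy A Wstar u w1 := by
            apply mkconn
            intro g hg1 hg2
            rw [hw1pos] at hg1 hg2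
            exact conn_cross hKmem hKconv hconn g (by omega) (by omega)
          obtain ⟨c', hc'W, h1c', h2c'⟩ :=
            conn_cross hKmem hKconv hconn rp (by omega) (by omega)
          obtain ⟨w2, hw2A, hw2pos⟩ := (hKmem c' _).mp h2c'
          have hw1c' : c' ∈ A w1 := by
            obtain ⟨v', hv'A, hv'pos⟩ := (hKmem c' _).mp h1c'
            have : v' = w1 := hposinj (by rw [hv'pos, hw1pos])
            rwa [this] at hv'A
          have hw1w2 : ConnectedBy A Wstar w1 w2 :=
            Relation.ReflTransGen.single
              ⟨c', Finset.mem_inter.mpr ⟨Finset.mem_inter.mpr ⟨hw1c', hw2A⟩, hc'W⟩⟩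
          have h2 : ConnectedBy A Wstar v w2 := by
            apply mkconn
            intro g hg1 hg2
            rw [hw2pos] at hg1 hg2
            exact conn_cross hKmem hKconv hconn g (by omega) (by omega)
          exact ⟨h1, h2.trans (connectedBy_symm hw1w2)⟩
        set Pex : Set V := {v : V | v ∈ Kc ∧ pos v ∈ covP ∧ pos v ∉ covS} with hPexdef
        set Sex : Set V := {v : V | v ∈ Kc ∧ pos v ∈ covS ∧ pos v ∉ covP} with hSexdef
        have hPB2 : PB.ncard ≤ Pex.ncard * Sex.ncard := by
          apply ncard_pairs_between
          rintro q ⟨hd, u, v, rfl, hconn, ⟨huP, huS⟩, hvS, hvP⟩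
          obtain ⟨h1, h2⟩ := hbadmem u v hconn huP huS hvS hvP
          exact ⟨u, v, rfl, ⟨h1, huP, huS⟩, ⟨h2, hvS, hvP⟩⟩
        have hw0K : w0 ∈ Kc := hw0conn
        have hw0nP : w0 ∉ Pex := fun h => h.2.2 hw0S
        have hw0nS : w0 ∉ Sex := fun h => h.2.2 hw0P
        have hdisj : Disjoint Pex Sex := by
          rw [Set.disjoint_left]
          rintro x ⟨_, _, hx2⟩ ⟨_, hx3, _⟩
          exact hx2 hx3
        have hsubK : insert w0 (Pex ∪ Sex) ⊆ Kc := by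
          rintro x (rfl | hx)
          · exact hw0K
          · rcases hx with hx | hx
            · exact hx.1
            · exact hx.1
        have hcard2 : Pex.ncard + Sex.ncard + 1 ≤ Kc.ncard := by
          have h1 : (Pex ∪ Sex).ncard = Pex.ncard + Sex.ncard :=
            Set.ncard_union_eq hdisj (Set.toFinite _) (Set.toFinite _)
          have h2 : (insert w0 (Pex ∪ Sex)).ncard = (Pex ∪ Sex).ncard + 1 :=
            Set.ncard_insert_of_notMem (by
              rintro (hx | hx)
              · exact hw0nP hx
              · exact hw0nS hx) (Set.toFinite _)
          calc Pex.ncard + Sex.ncard + 1 = (insert w0 (Pex ∪ Sex)).ncard := by rw [h2, h1]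
            _ ≤ Kc.ncard := Set.ncard_le_ncard hsubK (Set.toFinite _)
        have hKcpairs : Kc.ncard.choose 2 ≤ (connPairs A Wstar).ncard := by
          apply pairs_le
          intro u v hu hv huv
          refine ⟨fun h => huv (Sym2.mk_isDiag_iff.mp h), u, v, rfl, ?_⟩
          exact Relation.ReflTransGen.trans hu (connectedBy_symm hv)
        calc 2 * PB.ncard ≤ 2 * (Pex.ncard * Sex.ncard) := by omega
          _ ≤ (Pex.ncard + Sex.ncard + 1).choose 2 := two_ab_le_choose _ _
          _ ≤ Kc.ncard.choose 2 := Nat.choose_le_choose 2 hcard2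
          _ ≤ (connPairs A Wstar).ncard := hKcpairs
    -- final assembly
    have hfin : consScore A Wstar ≤ 2 * (consScore A X0 + consScore A Y0) := by
      have hS : consScore A Wstar = (connPairs A Wstar).ncard := rfl
      omega
    rcases le_total (consScore A X0) (consScore A Y0) with h | h
    · exact ⟨Y0, hY0card, by omega⟩
    · exact ⟨X0, hX0card, by omega⟩
end
end
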